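/- arXiv:1301.2850 — 12 statements merged into one kernel-verified Lean document; each statement's English description precedes it below -/
import Mathlib

section
/- For complex matrices A (m×n) and B (m×p), the rank of the block matrix [A, B] satisfies r[A, B] = r(A) + r(E_A·B), where E_A = I_m - A·A† is the orthogonal projector onto the orthogonal complement of the column space of A. -/
open Matrix

/-- `X` satisfies the four Penrose equations for `A`, i.e. `X` is the
Moore–Penrose inverse of `A`. -/
def IsMP {m n : Type*} [Fintype m] [Fintype n]
    (A : Matrix m n ℂ) (X : Matrix n m ℂ) : Prop :=
  A * X * A = A ∧ X * A * X = X ∧ (A * X)ᴴ = A * X ∧ (X * A)ᴴ = X * A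

/-- the number of positive eigenvalues (with multiplicity) of a Hermitian matrix -/
noncomputable def iPos {n : Type*} [Fintype n] [DecidableEq n] {A : Matrix n n ℂ}
    (hA : A.IsHermitian) : ℕ := Nat.card {i // 0 < hA.eigenvalues i}

/-- the number of negative eigenvalues (with multiplicity) of a Hermitian matrix -/
noncomputable def iNeg {n : Type*} [Fintype n] [DecidableEq n] {A : Matrix n n ℂ}
    (hA : A.IsHermitian) : ℕ := Nat.card {i // hA.eigenvalues i < 0}
theorem stmt0 (m n p : ℕ) (A : Matrix (Fin m) (Fin n) ℂ) (B : Matrix (Fin m) (Fin p) ℂ)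
    (Ad : Matrix (Fin n) (Fin m) ℂ) (hAd : IsMP A Ad) :
    (fromCols A B).rank = A.rank + ((1 - A * Ad) * B).rank := by
  obtain ⟨h1, h2, h3, h4⟩ := hAd
  set E := (1 : Matrix (Fin m) (Fin m) ℂ) - A * Ad with hE
  have hEB : E * B = B - A * (Ad * B) := by
    rw [hE, Matrix.sub_mul, Matrix.one_mul, Matrix.mul_assoc]
  have hrange : LinearMap.range (fromCols A B).mulVecLin
      = LinearMap.range A.mulVecLin ⊔ LinearMap.range (E * B).mulVecLin := by
    apply le_antisymm
    · rintro x ⟨v, rfl⟩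
      have hv : v = Sum.elim (v ∘ Sum.inl) (v ∘ Sum.inr) := by ext (i | i) <;> rfl
      set u := v ∘ Sum.inl
      set w := v ∘ Sum.inr
      have : (fromCols A B).mulVecLin v
          = A.mulVecLin (u + Ad *ᵥ (B *ᵥ w)) + (E * B).mulVecLin w := by
        rw [mulVecLin_apply, mulVecLin_apply, mulVecLin_apply, hv,
          fromCols_mulVec_sumElim, hEB, sub_mulVec, mulVec_add,
          mulVec_mulVec, mulVec_mulVec, Matrix.mul_assoc]
        abel
      rw [this]
      exact Submodule.add_mem _ (Submodule.mem_sup_left ⟨_, rfl⟩)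
        (Submodule.mem_sup_right ⟨_, rfl⟩)
    · apply sup_le
      · rintro x ⟨v, rfl⟩
        refine ⟨Sum.elim v 0, ?_⟩
        rw [mulVecLin_apply, mulVecLin_apply, fromCols_mulVec_sumElim]
        simp
      · rintro x ⟨v, rfl⟩
        refine ⟨Sum.elim (-(Ad *ᵥ (B *ᵥ v))) v, ?_⟩
        rw [mulVecLin_apply, mulVecLin_apply, fromCols_mulVec_sumElim, hEB,
          sub_mulVec, mulVec_neg, mulVec_mulVec, mulVec_mulVec, Matrix.mul_assoc]
        abel
  have hPidem : A * Ad * (A * Ad) = A * Ad := by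
    rw [← Matrix.mul_assoc, h1]
  have hinf : LinearMap.range A.mulVecLin ⊓ LinearMap.range (E * B).mulVecLin = ⊥ := by
    rw [Submodule.eq_bot_iff]
    rintro x ⟨⟨u, hu⟩, ⟨w, hw⟩⟩
    have hPx : (A * Ad) *ᵥ x = x := by
      rw [← hu]; simp only [mulVecLin_apply, mulVec_mulVec, Matrix.mul_assoc, h1]
    have hEx : (A * Ad) *ᵥ x = 0 := by
      rw [← hw]
      simp only [mulVecLin_apply, mulVec_mulVec, hE, ← Matrix.mul_assoc,
        Matrix.mul_sub, Matrix.mul_one, hPidem, sub_self, Matrix.zero_mul,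
        zero_mulVec]
    rw [← hPx, hEx]
  simp only [Matrix.rank]
  rw [hrange, ← Submodule.finrank_sup_add_finrank_inf_eq, hinf, finrank_bot, add_zero]
end

section
/- For complex matrices A (m×n), B (m×p), C (q×n), the rank of the 2×2 block matrix [[A, B],[C, 0]] equals r(B) + r(C) + r(E_B · A · F_C), where E_B = I_m - B·B† and F_C = I_n - C†·C. -/
/-!
Adding `-(E_B A C†) C` and `B (-(B† A))` to the top-left block is a block elimination by
unitriangular matrices, so it preserves the rank and replaces `A` by `G = E_B A F_C`.
Now `E_B` fixes `G` and kills `B`, so the column spaces of `G` and `B` meet only in `0`;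
likewise `F_C` fixes `G` and kills `C` on the right, so their row spaces meet only in `0`.
Hence the columns of `[[G, B], [C, 0]]` split as `[G; C] ⊕ [B; 0]` and the rows of `[G; C]`
as `G ⊕ C`, which makes the rank additive: `r(G) + r(B) + r(C)`.
-/

open Matrix

namespace Matrix

section Ring

variable {R m n : Type*} [Ring R] [Fintype m] [Fintype n] {A : Matrix m n R} {X : Matrix n m R}

lemma one_sub_mul_mul_of_mul_mul_eq [DecidableEq m] (h : A * X * A = A) :
    (1 - A * X) * A = 0 := by
  rw [Matrix.sub_mul, Matrix.one_mul, h, sub_self]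

lemma mul_one_sub_mul_of_mul_mul_eq [DecidableEq n] (h : A * X * A = A) :
    A * (1 - X * A) = 0 := by
  rw [Matrix.mul_sub, Matrix.mul_one, ← Matrix.mul_assoc, h, sub_self]

lemma isIdempotentElem_one_sub_mul_of_mul_mul_eq [DecidableEq m] (h : A * X * A = A) :
    IsIdempotentElem (1 - A * X) := by
  rw [IsIdempotentElem, Matrix.mul_sub, Matrix.mul_one, ← Matrix.mul_assoc,
    one_sub_mul_mul_of_mul_mul_eq h, Matrix.zero_mul, sub_zero]

lemma isIdempotentElem_one_sub_mul_of_mul_mul_eq' [DecidableEq n] (h : A * X * A = A) :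
    IsIdempotentElem (1 - X * A) := by
  rw [IsIdempotentElem, Matrix.sub_mul, Matrix.one_mul, Matrix.mul_assoc,
    mul_one_sub_mul_of_mul_mul_eq h, Matrix.mul_zero, sub_zero]

end Ring

section CommRing

variable {R m n p q : Type*} [CommRing R] [Fintype m] [Fintype n] [Fintype p] [Fintype q]
  [DecidableEq m] [DecidableEq n] [DecidableEq p] [DecidableEq q]

lemma rank_fromBlocks_zero₂₂_add_mul (A : Matrix m n R) (B : Matrix m p R) (C : Matrix q n R)
    (X : Matrix m q R) (Y : Matrix p n R) :
    (fromBlocks (A + X * C + B * Y) B C 0).rank = (fromBlocks A B C 0).rank := by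
  have hL : IsUnit (fromBlocks 1 X 0 1 : Matrix (m ⊕ q) (m ⊕ q) R).det := by simp
  have hR : IsUnit (fromBlocks 1 0 Y 1 : Matrix (n ⊕ p) (n ⊕ p) R).det := by simp
  have hfactor : fromBlocks (A + X * C + B * Y) B C 0
      = (fromBlocks 1 X 0 1 : Matrix (m ⊕ q) (m ⊕ q) R) * fromBlocks A B C 0
        * (fromBlocks 1 0 Y 1 : Matrix (n ⊕ p) (n ⊕ p) R) := by
    simp [fromBlocks_multiply, add_right_comm]
  rw [hfactor, rank_mul_eq_left_of_isUnit_det _ _ hR, rank_mul_eq_right_of_isUnit_det _ _ hL]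

end CommRing

section Field

variable {K m n₁ n₂ : Type*} [Field K] [Fintype n₁] [Fintype n₂]

lemma range_mulVecLin_fromCols (A₁ : Matrix m n₁ K) (A₂ : Matrix m n₂ K) :
    LinearMap.range (fromCols A₁ A₂).mulVecLin
      = LinearMap.range A₁.mulVecLin ⊔ LinearMap.range A₂.mulVecLin := by
  rw [range_mulVecLin, range_mulVecLin, range_mulVecLin, ← Submodule.span_union,
    ← Set.Sum.elim_range]
  congr 2
  ext (j | j) <;> rfl

lemma disjoint_range_mulVecLin_of_mul_eq [Fintype m] {A₁ : Matrix m n₁ K}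
    {A₂ : Matrix m n₂ K} (P : Matrix m m K) (h₁ : P * A₁ = A₁) (h₂ : P * A₂ = 0) :
    Disjoint (LinearMap.range A₁.mulVecLin) (LinearMap.range A₂.mulVecLin) := by
  rw [Submodule.disjoint_def]
  rintro _ ⟨x, rfl⟩ ⟨y, hy⟩
  simp only [mulVecLin_apply] at hy ⊢
  rw [← h₁, ← mulVec_mulVec, ← hy, mulVec_mulVec, h₂, zero_mulVec]

lemma rank_fromCols_of_mul_eq [Fintype m] {A₁ : Matrix m n₁ K} {A₂ : Matrix m n₂ K}
    (P : Matrix m m K) (h₁ : P * A₁ = A₁) (h₂ : P * A₂ = 0) :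
    (fromCols A₁ A₂).rank = A₁.rank + A₂.rank := by
  rw [rank, rank, rank, range_mulVecLin_fromCols, ← Submodule.finrank_sup_add_finrank_inf_eq,
    (disjoint_range_mulVecLin_of_mul_eq P h₁ h₂).eq_bot, finrank_bot, add_zero]

lemma rank_fromRows_of_mul_eq [Fintype m] {A₁ : Matrix n₁ m K} {A₂ : Matrix n₂ m K}
    (Q : Matrix m m K) (h₁ : A₁ * Q = A₁) (h₂ : A₂ * Q = 0) :
    (fromRows A₁ A₂).rank = A₁.rank + A₂.rank := by
  rw [← rank_transpose, transpose_fromRows, ← rank_transpose A₁, ← rank_transpose A₂]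
  exact rank_fromCols_of_mul_eq Qᵀ (by rw [← transpose_mul, h₁])
    (by rw [← transpose_mul, h₂, transpose_zero])

lemma rank_fromBlocks_zero₂₂_of_mul_eq {m n p q : Type*} [Fintype m] [Fintype n] [Fintype p]
    [Fintype q] [DecidableEq p] [DecidableEq q] {G : Matrix m n K} {B : Matrix m p K}
    {C : Matrix q n K} (P : Matrix m m K) (Q : Matrix n n K)
    (hPG : P * G = G) (hPB : P * B = 0) (hGQ : G * Q = G) (hCQ : C * Q = 0) :
    (fromBlocks G B C 0).rank = G.rank + B.rank + C.rank := by
  rw [← fromCols_fromRows_eq_fromBlocks, rank_fromCols_of_mul_eq (fromBlocks P 0 0 1)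
    (by simp [fromBlocks_mul_fromRows, hPG]) (by simp [fromBlocks_mul_fromRows, hPB]),
    rank_fromRows_of_mul_eq Q hGQ hCQ,
    rank_fromRows_of_mul_eq 1 (Matrix.mul_one B) (Matrix.zero_mul 1), rank_zero]
  ring

end Field

end Matrix

theorem stmt1 (m n p q : ℕ) (A : Matrix (Fin m) (Fin n) ℂ) (B : Matrix (Fin m) (Fin p) ℂ)
    (C : Matrix (Fin q) (Fin n) ℂ)
    (Bd : Matrix (Fin p) (Fin m) ℂ) (hBd : IsMP B Bd)
    (Cd : Matrix (Fin n) (Fin q) ℂ) (hCd : IsMP C Cd) :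
    (fromBlocks A B C 0).rank
      = B.rank + C.rank + ((1 - B * Bd) * A * (1 - Cd * C)).rank := by
  obtain ⟨hB, -⟩ := hBd
  obtain ⟨hC, -⟩ := hCd
  set E := 1 - B * Bd
  set F := 1 - Cd * C
  have hreduce : E * A * F = A + -(E * A * Cd) * C + B * -(Bd * A) := by
    simp only [E, F, Matrix.sub_mul, Matrix.mul_sub, Matrix.one_mul, Matrix.mul_one,
      Matrix.neg_mul, Matrix.mul_neg, Matrix.mul_assoc]
    abel
  have hE : E * (E * A * F) = E * A * F := by
    rw [← Matrix.mul_assoc, ← Matrix.mul_assoc,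
      (isIdempotentElem_one_sub_mul_of_mul_mul_eq hB).eq]
  have hF : E * A * F * F = E * A * F := by
    rw [Matrix.mul_assoc, (isIdempotentElem_one_sub_mul_of_mul_mul_eq' hC).eq]
  rw [← rank_fromBlocks_zero₂₂_add_mul A B C (-(E * A * Cd)) (-(Bd * A)), ← hreduce,
    rank_fromBlocks_zero₂₂_of_mul_eq E F hE (one_sub_mul_mul_of_mul_mul_eq hB) hF
      (mul_one_sub_mul_of_mul_mul_eq hC)]
  ring
end

section
/- Let A be an m×m Hermitian matrix and B an m×n complex matrix, and let U = [[A, B],[B*, 0]]. Then the positive and negative inertia indices of U satisfy i_±(U) = r(B) + i_±(E_B · A · E_B), where E_B = I_m - B·B†. -/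
open Matrix

/-!
For a square complex matrix `M`, `x ↦ Re (x* M x)` is a real quadratic form on `ℂ^k`. If `M` is
Hermitian, a unitary diagonalisation writes it as `∑ λᵢ ((Re yᵢ)² + (Im yᵢ)²)`, so by Sylvester's
law of inertia its signature is twice the inertia of `M`; in particular inertia is invariant under
congruence.

With `P = B B†` the orthogonal projector onto the range of `B` and `E = 1 - P`, congruence by
`[[1, Z], [0, 1]]`, `Z = (P/2 - 1) A B†*`, turns `U` into `[[E A E, B], [B*, 0]]`. For a block
matrix `[[C, B], [B*, 0]]` with `C B = 0` and `B* C = 0`, the form on the kernel of `(v, y) ↦ B* v`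
is `Re (v* C v)`, and that map has real rank at most `2 r(B)`; hence `sigPos ≤ 2 r(B) + sigPos C`.
Conversely the vectors `(E a + B b, b)`, with `a` in a positive definite subspace for `C` and
`b ∈ range B*`, have form value `Re (a* C a) + 2 |B b|²`. The negative index is the positive index
of `-U`, which has the same shape.
-/

open Module QuadraticMap LinearMap

section Signature

variable {𝕜 M M' N : Type*} [Field 𝕜] [LinearOrder 𝕜]
  [AddCommGroup M] [Module 𝕜 M] [FiniteDimensional 𝕜 M]
  [AddCommGroup M'] [Module 𝕜 M'] [FiniteDimensional 𝕜 M']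
  [AddCommGroup N] [Module 𝕜 N]

theorem finrank_le_sigPos_of_pos {Q : QuadraticForm 𝕜 M} (f : N →ₗ[𝕜] M)
    (hf : ∀ z, z ≠ 0 → 0 < Q (f z)) : finrank 𝕜 N ≤ sigPos Q := by
  have hinj : Function.Injective f := by
    refine (injective_iff_map_eq_zero f).2 fun z hz => ?_
    by_contra hz0
    simpa [hz] using hf z hz0
  rw [← finrank_range_of_inj hinj]
  refine le_sigPos_of_posDef Q fun ⟨x, hx⟩ hx0 => ?_
  obtain ⟨z, rfl⟩ := hx
  exact hf z fun h => hx0 (by simp [h])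

theorem sigPos_le_finrank_range_add_sigPos {Q : QuadraticForm 𝕜 M} {Q' : QuadraticForm 𝕜 M'}
    (φ : M →ₗ[𝕜] N) (ψ : M →ₗ[𝕜] M') (h : ∀ x ∈ ker φ, Q' (ψ x) = Q x) :
    sigPos Q ≤ finrank 𝕜 (range φ) + sigPos Q' := by
  obtain ⟨V, hV, hVpos⟩ := exists_finrank_eq_sigPos_and_posDef Q
  set φV := φ ∘ₗ V.subtype
  have hrange : finrank 𝕜 (range φV) ≤ finrank 𝕜 (range φ) :=
    Submodule.finrank_mono (range_comp_le_range _ _)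
  have hker : finrank 𝕜 (ker φV) ≤ sigPos Q' := by
    refine finrank_le_sigPos_of_pos (ψ ∘ₗ V.subtype ∘ₗ (ker φV).subtype) fun z hz => ?_
    have hpos := hVpos (z : V) (by simpa using hz)
    show 0 < Q' (ψ ((z : V) : M))
    rwa [h ((z : V) : M) z.2]
  have := finrank_range_add_finrank_ker φV
  omega

end Signature

theorem ncard_setOf_fst {ι κ : Type*} (p : ι → Prop) :
    {j : ι × κ | p j.1}.ncard = Nat.card {i // p i} * Nat.card κ := by
  rw [← Set.preimage_ofPred_eq, ← Set.prod_univ, Set.ncard_prod, Set.ncard_univ]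
  rfl

theorem Matrix.rank_neg {R m n : Type*} [CommRing R] [Fintype n] (B : Matrix m n R) :
    (-B).rank = B.rank := by
  simpa using rank_smul_of_mem_nonZeroDivisors B isUnit_one.neg.mem_nonZeroDivisors

section HermForm

variable {ι : Type*} [Fintype ι]

noncomputable def hermForm (A : Matrix ι ι ℂ) : QuadraticForm ℝ (ι → ℂ) :=
  BilinMap.toQuadraticMap <| mk₂ ℝ (fun x y => (star x ⬝ᵥ A *ᵥ y).re)
    (fun x x' y => by simp [star_add, add_dotProduct])
    (fun c x y => by simp [star_smul, smul_dotProduct])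
    (fun x y y' => by simp [mulVec_add, dotProduct_add])
    (fun c x y => by simp [mulVec_smul, dotProduct_smul])

theorem hermForm_apply (A : Matrix ι ι ℂ) (x : ι → ℂ) :
    hermForm A x = (star x ⬝ᵥ A *ᵥ x).re := rfl

theorem hermForm_neg (A : Matrix ι ι ℂ) : hermForm (-A) = -hermForm A := by
  ext x
  simp [hermForm_apply, neg_mulVec]

theorem hermForm_mul_mul_conjTranspose (S A : Matrix ι ι ℂ) (x : ι → ℂ) :
    hermForm (S * A * Sᴴ) x = hermForm A (Sᴴ *ᵥ x) := by
  rw [hermForm_apply, hermForm_apply, star_mulVec, conjTranspose_conjTranspose,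
    ← dotProduct_mulVec, mulVec_mulVec, mulVec_mulVec]

theorem sigPos_hermForm_mul_mul_conjTranspose [DecidableEq ι] (S A : Matrix ι ι ℂ)
    [Invertible S] : sigPos (hermForm (S * A * Sᴴ)) = sigPos (hermForm A) :=
  Equivalent.sigPos_eq
    ⟨{ (toLinearEquiv' Sᴴ (invertibleConjTranspose S)).restrictScalars ℝ with
      map_app' := fun x => (hermForm_mul_mul_conjTranspose S A x).symm }⟩

variable [DecidableEq ι] {A : Matrix ι ι ℂ}

theorem hermForm_eq_sum_eigenvalues (hA : A.IsHermitian) (x : ι → ℂ) :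
    hermForm A x = ∑ i, hA.eigenvalues i *
      Complex.normSq ((star (hA.eigenvectorUnitary : Matrix ι ι ℂ) *ᵥ x) i) := by
  conv_lhs => rw [hA.spectral_theorem, Unitary.conjStarAlgAut_apply]
  set V : Matrix ι ι ℂ := ↑hA.eigenvectorUnitary
  have hV : star x ᵥ* V = star (star V *ᵥ x) := by
    rw [star_mulVec, star_eq_conjTranspose, conjTranspose_conjTranspose]
  rw [hermForm_apply, ← mulVec_mulVec, ← mulVec_mulVec, dotProduct_mulVec, hV]
  simp only [dotProduct, mulVec_diagonal, Pi.star_apply, Complex.re_sum, Function.comp_apply]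
  refine Finset.sum_congr rfl fun i _ => ?_
  rw [mul_left_comm, Complex.star_def, ← Complex.normSq_eq_conj_mul_self]
  simp

theorem hermForm_equivalent_weightedSumSquares (hA : A.IsHermitian) :
    Equivalent (hermForm A) (weightedSumSquares ℝ fun j : ι × Fin 2 => hA.eigenvalues j.1) := by
  let b : Basis (ι × Fin 2) ℝ (ι → ℂ) :=
    (Pi.basis fun _ => Complex.basisOneI).reindex (Equiv.sigmaEquivProd ι (Fin 2))
  have hV : ∀ y, UnitaryGroup.toLinearEquiv hA.eigenvectorUnitary⁻¹ y =
      star (hA.eigenvectorUnitary : Matrix ι ι ℂ) *ᵥ y := fun _ => rfl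
  refine ⟨{ (UnitaryGroup.toLinearEquiv hA.eigenvectorUnitary⁻¹).restrictScalars ℝ ≪≫ₗ
    b.equivFun with map_app' := fun x => ?_ }⟩
  rw [hermForm_eq_sum_eigenvalues hA, weightedSumSquares_apply, Fintype.sum_prod_type]
  refine Finset.sum_congr rfl fun i _ => ?_
  simp [b, Fin.sum_univ_two, Complex.normSq_apply, Pi.basis_repr, mul_add, hV]

theorem sigPos_hermForm (hA : A.IsHermitian) : sigPos (hermForm A) = 2 * iPos hA := by
  rw [QuadraticForm.sigPos_of_equiv_weightedSumSquares (hermForm_equivalent_weightedSumSquares hA),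
    ncard_setOf_fst (0 < hA.eigenvalues ·), Nat.card_fin, mul_comm]
  rfl

theorem sigNeg_hermForm (hA : A.IsHermitian) : sigNeg (hermForm A) = 2 * iNeg hA := by
  rw [QuadraticForm.sigNeg_of_equiv_weightedSumSquares (hermForm_equivalent_weightedSumSquares hA),
    ncard_setOf_fst (hA.eigenvalues · < 0), Nat.card_fin, mul_comm]
  rfl

end HermForm

section Blocks

variable {m n : Type*} [Fintype m] [Fintype n]

theorem hermForm_fromBlocks_sumElim (C : Matrix m m ℂ) (B : Matrix m n ℂ) (v : m → ℂ)
    (y : n → ℂ) :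
    hermForm (fromBlocks C B Bᴴ 0) (Sum.elim v y) =
      hermForm C v + 2 * (star (Bᴴ *ᵥ v) ⬝ᵥ y).re := by
  have hcross : star v ⬝ᵥ B *ᵥ y = star (Bᴴ *ᵥ v) ⬝ᵥ y := by
    rw [dotProduct_mulVec, star_mulVec, conjTranspose_conjTranspose]
  have hcross' : star y ⬝ᵥ Bᴴ *ᵥ v = star (star (Bᴴ *ᵥ v) ⬝ᵥ y) := by
    rw [star_dotProduct]
  have hstar : star (Sum.elim v y) = Sum.elim (star v) (star y) := by
    ext (i | i) <;> rfl
  rw [hermForm_apply, hermForm_apply, fromBlocks_mulVec, dotProduct_block, hstar]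
  simp only [Sum.elim_comp_inl, Sum.elim_comp_inr, zero_mulVec, add_zero, dotProduct_add,
    Complex.add_re, hcross, hcross', Complex.star_def, Complex.conj_re]
  ring

open scoped ComplexOrder in
theorem sigPos_hermForm_fromBlocks_le (C : Matrix m m ℂ) (B : Matrix m n ℂ) :
    sigPos (hermForm (fromBlocks C B Bᴴ 0)) ≤ 2 * B.rank + sigPos (hermForm C) := by
  let left : (m ⊕ n → ℂ) →ₗ[ℂ] (m → ℂ) := funLeft ℂ ℂ Sum.inl
  let φ := Bᴴ.mulVecLin ∘ₗ left
  have hrange : finrank ℝ (range (φ.restrictScalars ℝ)) ≤ 2 * B.rank := by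
    rw [range_restrictScalars, ← rank_conjTranspose B]
    exact (finrank_real_of_complex (range φ)).trans_le
      (Nat.mul_le_mul_left 2 (Submodule.finrank_mono (range_comp_le_range _ _)))
  refine (sigPos_le_finrank_range_add_sigPos (Q' := hermForm C) (φ.restrictScalars ℝ)
    (left.restrictScalars ℝ) fun x hx => ?_).trans (by omega)
  have hx' : Bᴴ *ᵥ (x ∘ Sum.inl) = 0 := hx
  conv_rhs => rw [← Sum.elim_comp_inl_inr x, hermForm_fromBlocks_sumElim, hx']
  simp only [star_zero, zero_dotProduct, Complex.zero_re, mul_zero, add_zero]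
  rfl

theorem hermForm_add_mulVec {C : Matrix m m ℂ} {B : Matrix m n ℂ} (hCB : C * B = 0)
    (hBC : Bᴴ * C = 0) (a : m → ℂ) (c : n → ℂ) : hermForm C (a + B *ᵥ c) = hermForm C a := by
  rw [hermForm_apply, hermForm_apply, mulVec_add, mulVec_mulVec, hCB, zero_mulVec, add_zero,
    star_add, add_dotProduct, star_mulVec, ← dotProduct_mulVec, mulVec_mulVec, hBC, zero_mulVec,
    dotProduct_zero, add_zero]

variable [DecidableEq m]

theorem hermForm_fromBlocks_sumElim_projection {C : Matrix m m ℂ} {B : Matrix m n ℂ}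
    {Bd : Matrix n m ℂ} (hCB : C * B = 0) (hBC : Bᴴ * C = 0) (hPB : B * Bd * B = B)
    (hPH : (B * Bd)ᴴ = B * Bd) (a : m → ℂ) (b : n → ℂ) :
    hermForm (fromBlocks C B Bᴴ 0) (Sum.elim ((1 - B * Bd) *ᵥ a + B *ᵥ b) b) =
      hermForm C a + 2 * (star (B *ᵥ b) ⬝ᵥ B *ᵥ b).re := by
  have hBE : Bᴴ * (1 - B * Bd) = 0 := by
    rw [Matrix.mul_sub, Matrix.mul_one, ← hPH, ← conjTranspose_mul, hPB, sub_self]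
  have hEa : (1 - B * Bd) *ᵥ a + B *ᵥ b = a + B *ᵥ (b - Bd *ᵥ a) := by
    rw [sub_mulVec, one_mulVec, mulVec_sub, mulVec_mulVec]
    abel
  have hBv : Bᴴ *ᵥ ((1 - B * Bd) *ᵥ a + B *ᵥ b) = Bᴴ *ᵥ (B *ᵥ b) := by
    rw [mulVec_add, mulVec_mulVec, hBE, zero_mulVec, zero_add]
  rw [hermForm_fromBlocks_sumElim, hBv, hEa, hermForm_add_mulVec hCB hBC, star_mulVec,
    conjTranspose_conjTranspose, ← dotProduct_mulVec]

open scoped ComplexOrder in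
theorem le_sigPos_hermForm_fromBlocks {C : Matrix m m ℂ} {B : Matrix m n ℂ} {Bd : Matrix n m ℂ}
    (hCB : C * B = 0) (hBC : Bᴴ * C = 0) (hPB : B * Bd * B = B) (hPH : (B * Bd)ᴴ = B * Bd) :
    2 * B.rank + sigPos (hermForm C) ≤ sigPos (hermForm (fromBlocks C B Bᴴ 0)) := by
  obtain ⟨V, hV, hVpos⟩ := exists_finrank_eq_sigPos_and_posDef (hermForm C)
  let W := range Bᴴ.mulVecLin
  let f : (m → ℂ) × (n → ℂ) →ₗ[ℂ] (m ⊕ n → ℂ) :=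
    { toFun := fun p => Sum.elim ((1 - B * Bd) *ᵥ p.1 + B *ᵥ p.2) p.2
      map_add' := fun p q => by ext (i | i) <;> simp [mulVec_add, add_add_add_comm]
      map_smul' := fun c p => by ext (i | i) <;> simp [mulVec_smul, mul_add] }
  have hdim : finrank ℝ (V × W) = sigPos (hermForm C) + 2 * B.rank := by
    rw [finrank_prod, hV, finrank_real_of_complex, ← rank_conjTranspose B]
    rfl
  have hBW : ∀ b ∈ W, B *ᵥ b = 0 → b = 0 := by
    rintro _ ⟨w, rfl⟩ h
    have : w ∈ ker (Bᴴᴴ * Bᴴ).mulVecLin := by simpa [mulVec_mulVec] using h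
    rwa [ker_mulVecLin_conjTranspose_mul_self] at this
  rw [add_comm, ← hdim]
  refine finrank_le_sigPos_of_pos
    (f.restrictScalars ℝ ∘ₗ V.subtype.prodMap (W.subtype.restrictScalars ℝ)) ?_
  rintro ⟨⟨a, ha⟩, ⟨b, hb⟩⟩ hab
  show 0 < hermForm _ (Sum.elim ((1 - B * Bd) *ᵥ a + B *ᵥ b) b)
  rw [hermForm_fromBlocks_sumElim_projection hCB hBC hPB hPH]
  have hBb : 0 ≤ (star (B *ᵥ b) ⬝ᵥ B *ᵥ b).re :=
    (Complex.nonneg_iff.1 (dotProduct_star_self_nonneg _)).1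
  by_cases ha0 : a = 0
  · have hb0 : B *ᵥ b ≠ 0 := fun h => hab (by simp [ha0, hBW b hb h])
    have := (Complex.pos_iff.1 (dotProduct_star_self_pos_iff.2 hb0)).1
    simp [ha0, this]
  · have := hVpos ⟨a, ha⟩ (by simpa using ha0)
    rw [QuadraticMap.restrict_apply] at this
    linarith

end Blocks

section Inertia

variable {m n : Type*} [Fintype m] [Fintype n] [DecidableEq m] [DecidableEq n]
  {A : Matrix m m ℂ} {B : Matrix m n ℂ} {Bd : Matrix n m ℂ}

theorem sigPos_hermForm_fromBlocks_eq (hA : A.IsHermitian) (hPB : B * Bd * B = B)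
    (hPH : (B * Bd)ᴴ = B * Bd) :
    sigPos (hermForm (fromBlocks A B Bᴴ 0)) =
      2 * B.rank + sigPos (hermForm ((1 - B * Bd) * A * (1 - B * Bd))) := by
  set P := B * Bd
  have hEB : (1 - P) * B = 0 := by rw [Matrix.sub_mul, Matrix.one_mul, hPB, sub_self]
  have hBE : Bᴴ * (1 - P) = 0 := by
    rw [← hPH, ← conjTranspose_one, ← conjTranspose_sub, ← conjTranspose_mul, hEB,
      conjTranspose_zero]
  let Z : Matrix m n ℂ := ((2⁻¹ : ℂ) • P - 1) * A * Bdᴴ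
  have hcong : fromBlocks 1 Z 0 1 * fromBlocks A B Bᴴ 0 * (fromBlocks 1 Z 0 1)ᴴ =
      fromBlocks ((1 - P) * A * (1 - P)) B Bᴴ 0 := by
    have hZB : Z * Bᴴ = ((2⁻¹ : ℂ) • P - 1) * A * P := by
      rw [Matrix.mul_assoc, ← conjTranspose_mul, hPH]
    have hBZ : B * Zᴴ = P * A * ((2⁻¹ : ℂ) • P - 1) := by
      simp [Z, hA.eq, hPH, P, Matrix.mul_assoc]
    simp only [fromBlocks_conjTranspose, fromBlocks_multiply, conjTranspose_one,
      conjTranspose_zero, Matrix.one_mul, Matrix.mul_one, Matrix.zero_mul, Matrix.mul_zero,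
      add_zero, zero_add, hZB, hBZ]
    congr 1
    simp only [Matrix.sub_mul, Matrix.mul_sub, Matrix.smul_mul, Matrix.mul_smul, Matrix.mul_one,
      Matrix.one_mul, Matrix.mul_assoc]
    module
  have : Invertible (fromBlocks 1 Z 0 1) :=
    @fromBlocksZero₂₁Invertible _ _ _ _ _ _ _ _ 1 Z 1 invertibleOne invertibleOne
  rw [← sigPos_hermForm_mul_mul_conjTranspose (fromBlocks 1 Z 0 1), hcong]
  refine le_antisymm (sigPos_hermForm_fromBlocks_le _ B)
    (le_sigPos_hermForm_fromBlocks ?_ ?_ hPB hPH)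
  · rw [Matrix.mul_assoc, hEB, Matrix.mul_zero]
  · rw [← Matrix.mul_assoc, ← Matrix.mul_assoc, hBE, Matrix.zero_mul, Matrix.zero_mul]

theorem sigNeg_hermForm_fromBlocks_eq (hA : A.IsHermitian) (hPB : B * Bd * B = B)
    (hPH : (B * Bd)ᴴ = B * Bd) :
    sigNeg (hermForm (fromBlocks A B Bᴴ 0)) =
      2 * B.rank + sigNeg (hermForm ((1 - B * Bd) * A * (1 - B * Bd))) := by
  have h := sigPos_hermForm_fromBlocks_eq hA.neg (B := -B) (Bd := -Bd)
    (by simpa using hPB) (by simpa using hPH)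
  have hU : fromBlocks (-A) (-B) (-B)ᴴ 0 = -fromBlocks A B Bᴴ (0 : Matrix n n ℂ) := by
    rw [fromBlocks_neg, neg_zero, conjTranspose_neg]
  simpa only [hU, Matrix.neg_mul, Matrix.mul_neg, neg_neg, hermForm_neg, sigPos_neg,
    Matrix.rank_neg] using h

end Inertia

theorem stmt2 (m n : ℕ) (A : Matrix (Fin m) (Fin m) ℂ) (hA : A.IsHermitian)
    (B : Matrix (Fin m) (Fin n) ℂ) (Bd : Matrix (Fin n) (Fin m) ℂ) (hBd : IsMP B Bd)
    (hU : (fromBlocks A B Bᴴ (0 : Matrix (Fin n) (Fin n) ℂ)).IsHermitian)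
    (hE : ((1 - B * Bd) * A * (1 - B * Bd)).IsHermitian) :
    iPos hU = B.rank + iPos hE ∧ iNeg hU = B.rank + iNeg hE := by
  obtain ⟨hPB, -, hPH, -⟩ := hBd
  have hpos := sigPos_hermForm_fromBlocks_eq hA hPB hPH
  have hneg := sigNeg_hermForm_fromBlocks_eq hA hPB hPH
  rw [sigPos_hermForm hU, sigPos_hermForm hE] at hpos
  rw [sigNeg_hermForm hU, sigNeg_hermForm hE] at hneg
  omega
end

section
/- Let A ∈ ℂ^{m×n} and B ∈ ℂ^{m×m} Hermitian. The matrix equation A·X·A* = B has a Hermitian solution X ∈ ℂ^{n×n} if and only if range(B) ⊆ range(A), equivalently A·A†·B = B. -/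
open Matrix

theorem stmt6 (m n : ℕ) (A : Matrix (Fin m) (Fin n) ℂ) (B : Matrix (Fin m) (Fin m) ℂ)
    (hB : B.IsHermitian) (Ad : Matrix (Fin n) (Fin m) ℂ) (hAd : IsMP A Ad) :
    ((∃ X : Matrix (Fin n) (Fin n) ℂ, X.IsHermitian ∧ A * X * Aᴴ = B) ↔
      LinearMap.range B.mulVecLin ≤ LinearMap.range A.mulVecLin) ∧
    ((∃ X : Matrix (Fin n) (Fin n) ℂ, X.IsHermitian ∧ A * X * Aᴴ = B) ↔
      A * Ad * B = B) := by
  obtain ⟨h1, h2, h3, h4⟩ := hAd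
  have hsolve : (∃ X : Matrix (Fin n) (Fin n) ℂ, X.IsHermitian ∧ A * X * Aᴴ = B) ↔
      A * Ad * B = B := by
    constructor
    · rintro ⟨X, hX, rfl⟩
      calc A * Ad * (A * X * Aᴴ) = (A * Ad * A) * X * Aᴴ := by
            simp only [Matrix.mul_assoc]
        _ = A * X * Aᴴ := by rw [h1]
    · intro h
      refine ⟨Ad * B * Adᴴ, ?_, ?_⟩
      · unfold Matrix.IsHermitian
        rw [conjTranspose_mul, conjTranspose_mul, conjTranspose_conjTranspose,
          hB.eq, Matrix.mul_assoc]
      · have hBA : B * (A * Ad) = B := by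
          calc B * (A * Ad) = Bᴴ * (A * Ad)ᴴ := by rw [hB.eq, h3]
            _ = (A * Ad * B)ᴴ := by simp [conjTranspose_mul, Matrix.mul_assoc]
            _ = Bᴴ := by rw [h]
            _ = B := hB.eq
        calc A * (Ad * B * Adᴴ) * Aᴴ = (A * Ad * B) * (Adᴴ * Aᴴ) := by
              simp only [Matrix.mul_assoc]
          _ = B * (A * Ad)ᴴ := by rw [h, conjTranspose_mul]
          _ = B * (A * Ad) := by rw [h3]
          _ = B := hBA
  have hrange : A * Ad * B = B ↔
      LinearMap.range B.mulVecLin ≤ LinearMap.range A.mulVecLin := by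
    constructor
    · intro h x hx
      obtain ⟨v, rfl⟩ := hx
      refine ⟨(Ad * B).mulVec v, ?_⟩
      simp only [mulVecLin_apply, mulVec_mulVec, ← Matrix.mul_assoc, h]
    · intro h
      ext i j
      have hx : B.mulVecLin (Pi.single j 1) ∈ LinearMap.range A.mulVecLin :=
        h ⟨Pi.single j 1, rfl⟩
      obtain ⟨w, hw⟩ := hx
      have : (A * Ad * B).mulVec (Pi.single j 1) = B.mulVec (Pi.single j 1) := by
        rw [← mulVec_mulVec, ← mulVec_mulVec]
        simp only [mulVecLin_apply] at hw
        rw [← hw, mulVec_mulVec, mulVec_mulVec, h1]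
      simpa [mulVec_single] using congrFun this i
  exact ⟨hsolve.trans hrange, hsolve⟩
end

section
/- Let A ∈ ℂ^{m×n}, B ∈ ℂ^{m×m} Hermitian with A·A†·B = B. Then for every matrix V ∈ ℂ^{n×n}, the matrix X = A†·B·(A†)* + F_A·V + V*·F_A (where F_A = I_n - A†·A) is a Hermitian solution of A·X·A* = B; conversely every Hermitian solution has this form for some V. -/
open Matrix

theorem stmt7 (m n : ℕ) (A : Matrix (Fin m) (Fin n) ℂ) (B : Matrix (Fin m) (Fin m) ℂ)
    (hB : B.IsHermitian) (Ad : Matrix (Fin n) (Fin m) ℂ) (hAd : IsMP A Ad)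
    (hcons : A * Ad * B = B) :
    (∀ V : Matrix (Fin n) (Fin n) ℂ,
      (Ad * B * Adᴴ + (1 - Ad * A) * V + Vᴴ * (1 - Ad * A)).IsHermitian ∧
      A * (Ad * B * Adᴴ + (1 - Ad * A) * V + Vᴴ * (1 - Ad * A)) * Aᴴ = B) ∧
    (∀ X : Matrix (Fin n) (Fin n) ℂ, X.IsHermitian → A * X * Aᴴ = B →
      ∃ V : Matrix (Fin n) (Fin n) ℂ,
        X = Ad * B * Adᴴ + (1 - Ad * A) * V + Vᴴ * (1 - Ad * A)) := by

  obtain ⟨h1, h2, h3, h4⟩ := hAd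
  have hF : (1 - Ad * A)ᴴ = 1 - Ad * A := by
    simp [conjTranspose_sub, h4]
  have hAF : A * (1 - Ad * A) = 0 := by
    rw [Matrix.mul_sub, Matrix.mul_one, ← Matrix.mul_assoc, h1, sub_self]
  have hFAh : (1 - Ad * A) * Aᴴ = 0 := by
    have := congrArg conjTranspose hAF
    simpa [conjTranspose_mul, hF] using this
  have hBAAd : B * (A * Ad) = B := by
    have := congrArg conjTranspose hcons
    simpa [conjTranspose_mul, h3, hB.eq, mul_assoc] using this
  constructor
  · intro V
    constructor
    · show _ᴴ = _
      simp only [conjTranspose_add, conjTranspose_mul, conjTranspose_conjTranspose,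
        hF, hB.eq]
      rw [← Matrix.mul_assoc]
      abel
    · rw [Matrix.mul_add, Matrix.mul_add, Matrix.add_mul, Matrix.add_mul,
        ← Matrix.mul_assoc A (1 - Ad * A) V, hAF]
      rw [show A * (Vᴴ * (1 - Ad * A)) * Aᴴ = (A * Vᴴ) * ((1 - Ad * A) * Aᴴ) by
        simp only [Matrix.mul_assoc], hFAh]
      simp only [Matrix.zero_mul, Matrix.mul_zero, add_zero]
      calc A * (Ad * B * Adᴴ) * Aᴴ = (A * Ad * B) * (Adᴴ * Aᴴ) := by
            simp only [Matrix.mul_assoc]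
        _ = B * (A * Ad)ᴴ := by rw [hcons, conjTranspose_mul]
        _ = B := by rw [h3, hBAAd]
  · intro X hX hXB
    set P := Ad * A with hPdef
    have hPh : Pᴴ = P := h4
    have hAdB : Ad * B * Adᴴ = P * X * P := by
      rw [← hXB]
      calc Ad * (A * X * Aᴴ) * Adᴴ = (Ad * A) * X * (Aᴴ * Adᴴ) := by
            simp only [Matrix.mul_assoc]
        _ = P * X * P := by rw [← conjTranspose_mul, h4]
    refine ⟨X * P + (1/2 : ℂ) • (X * (1 - P)), ?_⟩
    rw [hAdB]
    have hXh := hX.eq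
    simp only [conjTranspose_add, conjTranspose_smul, conjTranspose_mul, conjTranspose_sub,
      hPh, hF, hXh, mul_add, add_mul, mul_sub, sub_mul, mul_smul_comm, smul_mul_assoc,
      mul_one, one_mul, Matrix.mul_assoc, star_div₀, star_one, star_ofNat]
    module
end

section
/- Let A, B ∈ ℂ^{m×n}. The matrix equation A·X = B has a Hermitian solution X ∈ ℂ^{n×n} if and only if range(B) ⊆ range(A) and A·B* = B·A*. Moreover, under these conditions, the general Hermitian solution can be written as X = A†·B + (A†·B)* - A†·B·A†·A + F_A·U·F_A, with U an arbitrary n×n Hermitian matrix and F_A = I_n - A†·A. -/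
open Matrix

lemma range_le_aux {m n : ℕ} (A B : Matrix (Fin m) (Fin n) ℂ)
    (Ad : Matrix (Fin n) (Fin m) ℂ) (h1 : A * Ad * A = A)
    (hr : LinearMap.range B.mulVecLin ≤ LinearMap.range A.mulVecLin) :
    A * Ad * B = B := by
  ext i j
  obtain ⟨y, hy⟩ := hr ⟨Pi.single j 1, rfl⟩
  simp only [mulVecLin_apply] at hy
  have key : (A * Ad * B) *ᵥ Pi.single j 1 = B *ᵥ Pi.single j 1 := by
    rw [← mulVec_mulVec, ← mulVec_mulVec, ← hy, mulVec_mulVec, mulVec_mulVec, h1, hy]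
  have := congrFun key i
  simpa [mulVec_single_one] using this

theorem stmt8 (m n : ℕ) (A B : Matrix (Fin m) (Fin n) ℂ)
    (Ad : Matrix (Fin n) (Fin m) ℂ) (hAd : IsMP A Ad) :
    ((∃ X : Matrix (Fin n) (Fin n) ℂ, X.IsHermitian ∧ A * X = B) ↔
      (LinearMap.range B.mulVecLin ≤ LinearMap.range A.mulVecLin ∧ A * Bᴴ = B * Aᴴ)) ∧
    ((LinearMap.range B.mulVecLin ≤ LinearMap.range A.mulVecLin ∧ A * Bᴴ = B * Aᴴ) →
      ∀ X : Matrix (Fin n) (Fin n) ℂ,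
        (X.IsHermitian ∧ A * X = B) ↔
        ∃ U : Matrix (Fin n) (Fin n) ℂ, U.IsHermitian ∧
          X = Ad * B + (Ad * B)ᴴ - Ad * B * Ad * A
              + (1 - Ad * A) * U * (1 - Ad * A)) := by
  obtain ⟨h1, h2, h3, h4⟩ := hAd
  have e1 : Aᴴ * Adᴴ = Ad * A := by rw [← conjTranspose_mul]; exact h4
  have eP : (Ad * A)ᴴ = Ad * A := h4
  have main : (LinearMap.range B.mulVecLin ≤ LinearMap.range A.mulVecLin ∧ A * Bᴴ = B * Aᴴ) →
      ∀ X : Matrix (Fin n) (Fin n) ℂ,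
        (X.IsHermitian ∧ A * X = B) ↔
        ∃ U : Matrix (Fin n) (Fin n) ℂ, U.IsHermitian ∧
          X = Ad * B + (Ad * B)ᴴ - Ad * B * Ad * A
              + (1 - Ad * A) * U * (1 - Ad * A) := by
    rintro ⟨hr, hc⟩ X
    have hAAdB : A * Ad * B = B := range_le_aux A B Ad h1 hr
    have herm0 : (Ad * B * Ad * A).IsHermitian := by
      show _ᴴ = _
      simp only [conjTranspose_mul, Matrix.mul_assoc]
      rw [← Matrix.mul_assoc Aᴴ, e1, Matrix.mul_assoc, ← Matrix.mul_assoc A, hc,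
        Matrix.mul_assoc, e1]
    have hABH : A * (Ad * B)ᴴ = B * (Ad * A) := by
      rw [conjTranspose_mul, ← Matrix.mul_assoc, hc, Matrix.mul_assoc, e1]
    have t1 : A * (Ad * B) = B := by rw [← Matrix.mul_assoc, hAAdB]
    have t2 : A * (Ad * B * Ad * A) = B * (Ad * A) := by
      simp only [← Matrix.mul_assoc]
      rw [hAAdB, Matrix.mul_assoc]
    have hAX0 : A * (Ad * B + (Ad * B)ᴴ - Ad * B * Ad * A) = B := by
      rw [Matrix.mul_sub, Matrix.mul_add, t1, hABH, t2]
      abel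
    have hA1P : A * (1 - Ad * A) = 0 := by
      rw [Matrix.mul_sub, Matrix.mul_one, ← Matrix.mul_assoc, h1, sub_self]
    constructor
    · rintro ⟨hX, hAX⟩
      refine ⟨X, hX, ?_⟩
      have hAdB : Ad * B = Ad * A * X := by rw [← hAX, ← Matrix.mul_assoc]
      have hAdBH : (Ad * B)ᴴ = X * (Ad * A) := by
        rw [hAdB, conjTranspose_mul, eP, hX.eq]
      have hAdBAdA : Ad * B * Ad * A = Ad * A * X * (Ad * A) := by
        rw [hAdB, Matrix.mul_assoc]
      rw [hAdBAdA, hAdBH, hAdB]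
      generalize Ad * A = P
      noncomm_ring
    · rintro ⟨U, hU, rfl⟩
      have h1P : (1 - Ad * A)ᴴ = 1 - Ad * A := by
        rw [conjTranspose_sub, conjTranspose_one, eP]
      have h3P : ((1 - Ad * A) * U * (1 - Ad * A)).IsHermitian := by
        show _ᴴ = _
        rw [conjTranspose_mul, conjTranspose_mul, h1P, hU.eq, ← Matrix.mul_assoc]
      have hz : A * ((1 - Ad * A) * U * (1 - Ad * A)) = 0 := by
        simp only [← Matrix.mul_assoc]
        rw [hA1P, Matrix.zero_mul, Matrix.zero_mul]
      exact ⟨((isHermitian_add_transpose_self (Ad * B)).sub herm0).add h3P,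
        by rw [Matrix.mul_add, hAX0, hz, add_zero]⟩
  refine ⟨⟨?_, ?_⟩, main⟩
  · rintro ⟨X, hX, hAX⟩
    constructor
    · rw [← hAX, mulVecLin_mul]
      exact LinearMap.range_comp_le_range _ _
    · rw [← hAX, conjTranspose_mul, hX.eq, ← Matrix.mul_assoc]
  · rintro ⟨hr, hc⟩
    have h := (main ⟨hr, hc⟩ (Ad * B + (Ad * B)ᴴ - Ad * B * Ad * A
        + (1 - Ad * A) * 0 * (1 - Ad * A))).mpr ⟨0, isHermitian_zero, rfl⟩
    exact ⟨_, h.1, h.2⟩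
end

section
/- Let A, B ∈ ℂ^{m×n}. The matrix equation A·X = B has a positive semi-definite solution X ∈ ℂ^{n×n} if and only if range(B) ⊆ range(A), A·B* ≥ 0, and r(A·B*) = r(B). In this case every solution of the form X = B*·(A·B*)†·B + F_A·U·F_A with U ≥ 0 Hermitian is a positive semi-definite solution of A·X = B. -/
open Matrix ComplexOrder

/-!
If `A X = B` with `X = Sᴴ S ≥ 0`, then `A Bᴴ = (A Sᴴ)(A Sᴴ)ᴴ ≥ 0`, and the sandwich
`r(A Sᴴ) = r(A X Aᴴ) ≤ r(A X) ≤ r(A Sᴴ)` gives `r(A Bᴴ) = r(B)`.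
Conversely, `A Bᴴ = B Aᴴ` has range inside that of `B`, so the rank condition makes the two
ranges equal; hence `(A Bᴴ)(A Bᴴ)† B = B`. The Moore–Penrose inverse `G` of the positive
semidefinite `A Bᴴ` is Hermitian by uniqueness, hence `G = G (A Bᴴ) G ≥ 0`, and
`X = Bᴴ G B + F_A U F_A` is positive semidefinite with `A X = (A Bᴴ) G B + 0 = B`.
-/

section Rank

variable {𝕜 m n : Type*} [RCLike 𝕜] [Fintype m] [Fintype n]

open scoped MatrixOrder in
theorem Matrix.rank_mul_mul_conjTranspose_of_posSemidef {X : Matrix n n 𝕜} (hX : X.PosSemidef)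
    (A : Matrix m n 𝕜) : (A * X * Aᴴ).rank = (A * X).rank := by
  classical
  obtain ⟨S, rfl⟩ := CStarAlgebra.nonneg_iff_eq_star_mul_self.mp hX.nonneg
  rw [star_eq_conjTranspose] at *
  have hgram : A * (Sᴴ * S) * Aᴴ = A * Sᴴ * (A * Sᴴ)ᴴ := by
    simp only [conjTranspose_mul, conjTranspose_conjTranspose, Matrix.mul_assoc]
  refine le_antisymm (rank_mul_le_left _ _) ?_
  calc (A * (Sᴴ * S)).rank = (A * Sᴴ * S).rank := by rw [Matrix.mul_assoc]
    _ ≤ (A * Sᴴ).rank := rank_mul_le_left _ _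
    _ = (A * (Sᴴ * S) * Aᴴ).rank := by rw [hgram, rank_self_mul_conjTranspose]

theorem Matrix.range_mul_conjTranspose_eq_of_rank_eq {A B : Matrix m n 𝕜}
    (hH : (A * Bᴴ).IsHermitian) (hrank : (A * Bᴴ).rank = B.rank) :
    LinearMap.range (A * Bᴴ).mulVecLin = LinearMap.range B.mulVecLin := by
  refine Submodule.eq_of_le_of_finrank_eq ?_ hrank
  rw [← hH.eq, conjTranspose_mul, conjTranspose_conjTranspose, mulVecLin_mul]
  exact LinearMap.range_comp_le_range _ _

end Rank

namespace IsMP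

variable {k l : Type*} [Fintype k] [Fintype l] {M : Matrix k l ℂ} {X : Matrix l k ℂ}

theorem unique {Y : Matrix l k ℂ} (hX : IsMP M X) (hY : IsMP M Y) : X = Y := by
  obtain ⟨hX1, hX2, hX3, hX4⟩ := hX
  obtain ⟨hY1, hY2, hY3, hY4⟩ := hY
  have hMX : M * X = M * Y :=
    calc M * X = (M * Y * M * X)ᴴ := by rw [hY1, hX3]
      _ = (M * X)ᴴ * (M * Y)ᴴ := by simp only [conjTranspose_mul, Matrix.mul_assoc]
      _ = M * Y := by rw [hX3, hY3, ← Matrix.mul_assoc, hX1]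
  have hXM : X * M = Y * M :=
    calc X * M = (X * M * Y * M)ᴴ := by rw [Matrix.mul_assoc X, Matrix.mul_assoc X, hY1, hX4]
      _ = (Y * M)ᴴ * (X * M)ᴴ := by simp only [conjTranspose_mul, Matrix.mul_assoc]
      _ = Y * M := by rw [hX4, hY4, Matrix.mul_assoc, ← Matrix.mul_assoc M, hX1]
  calc X = X * M * X := hX2.symm
    _ = Y * M * Y := by rw [hXM, Matrix.mul_assoc, hMX, ← Matrix.mul_assoc]
    _ = Y := hY2

theorem conjTranspose (h : IsMP M X) : IsMP Mᴴ Xᴴ := by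
  obtain ⟨h1, h2, h3, h4⟩ := h
  refine ⟨?_, ?_, ?_, ?_⟩
  · simpa only [conjTranspose_mul, Matrix.mul_assoc] using congrArg Matrix.conjTranspose h1
  · simpa only [conjTranspose_mul, Matrix.mul_assoc] using congrArg Matrix.conjTranspose h2
  · rw [← conjTranspose_mul, conjTranspose_conjTranspose, h4]
  · rw [← conjTranspose_mul, conjTranspose_conjTranspose, h3]

theorem mul_mul_eq_of_range_le {p : Type*} [Fintype p] (h : IsMP M X) {B : Matrix k p ℂ}
    (hB : LinearMap.range B.mulVecLin ≤ LinearMap.range M.mulVecLin) : M * X * B = B := by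
  refine ext_iff_mulVec.mpr fun v => ?_
  obtain ⟨w, hw⟩ := hB ⟨v, rfl⟩
  simp only [mulVecLin_apply] at hw
  rw [← mulVec_mulVec, ← hw, mulVec_mulVec, h.1]

theorem mul_one_sub_mul_eq_zero [DecidableEq l] (h : IsMP M X) : M * (1 - X * M) = 0 := by
  rw [Matrix.mul_sub, Matrix.mul_one, ← Matrix.mul_assoc, h.1, sub_self]

theorem isHermitian_one_sub_mul [DecidableEq l] (h : IsMP M X) : (1 - X * M).IsHermitian := by
  rw [IsHermitian, conjTranspose_sub, conjTranspose_one, h.2.2.2]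

theorem isHermitian {N Y : Matrix k k ℂ} (hN : N.IsHermitian) (h : IsMP N Y) : Y.IsHermitian :=
  (hN.eq ▸ h.conjTranspose).unique h

theorem posSemidef {N Y : Matrix k k ℂ} (hN : N.PosSemidef) (h : IsMP N Y) : Y.PosSemidef := by
  have hY : Y = Yᴴ * N * Y := by rw [(h.isHermitian hN.isHermitian).eq, h.2.1]
  rw [hY]
  exact hN.conjTranspose_mul_mul_same Y

end IsMP

section Solutions

variable {m n : Type*} [Fintype m] [Fintype n]

theorem solvability_conditions_of_posSemidef_solution {A B : Matrix m n ℂ} {X : Matrix n n ℂ}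
    (hX : X.PosSemidef) (hAX : A * X = B) :
    LinearMap.range B.mulVecLin ≤ LinearMap.range A.mulVecLin ∧
      (A * Bᴴ).PosSemidef ∧ (A * Bᴴ).rank = B.rank := by
  have hABh : A * Bᴴ = A * X * Aᴴ := by
    rw [← hAX, conjTranspose_mul, hX.isHermitian.eq, Matrix.mul_assoc]
  refine ⟨?_, ?_, ?_⟩
  · rw [← hAX, mulVecLin_mul]
    exact LinearMap.range_comp_le_range _ _
  · rw [hABh]
    exact hX.mul_mul_conjTranspose_same A
  · rw [hABh, rank_mul_mul_conjTranspose_of_posSemidef hX, hAX]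

theorem posSemidef_solution_of_solvability_conditions [DecidableEq n] {A B : Matrix m n ℂ}
    {Ad : Matrix n m ℂ} (hAd : IsMP A Ad) {G : Matrix m m ℂ} (hG : IsMP (A * Bᴴ) G)
    (hPSD : (A * Bᴴ).PosSemidef) (hrank : (A * Bᴴ).rank = B.rank)
    {U : Matrix n n ℂ} (hU : U.PosSemidef) :
    (Bᴴ * G * B + (1 - Ad * A) * U * (1 - Ad * A)).PosSemidef ∧
      A * (Bᴴ * G * B + (1 - Ad * A) * U * (1 - Ad * A)) = B := by
  have hGB : A * Bᴴ * G * B = B := hG.mul_mul_eq_of_range_le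
    (range_mul_conjTranspose_eq_of_rank_eq hPSD.isHermitian hrank).ge
  have hF : (1 - Ad * A)ᴴ = 1 - Ad * A := hAd.isHermitian_one_sub_mul
  refine ⟨PosSemidef.add ((hG.posSemidef hPSD).conjTranspose_mul_mul_same B) ?_, ?_⟩
  · have := hU.conjTranspose_mul_mul_same (1 - Ad * A)
    rwa [hF] at this
  · have hA0 : A * ((1 - Ad * A) * U * (1 - Ad * A)) = 0 := by
      rw [← Matrix.mul_assoc, ← Matrix.mul_assoc, hAd.mul_one_sub_mul_eq_zero, Matrix.zero_mul,
        Matrix.zero_mul]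
    rw [Matrix.mul_add, hA0, add_zero, ← Matrix.mul_assoc, ← Matrix.mul_assoc, hGB]

end Solutions

theorem stmt9 (m n : ℕ) (A B : Matrix (Fin m) (Fin n) ℂ)
    (Ad : Matrix (Fin n) (Fin m) ℂ) (hAd : IsMP A Ad)
    (G : Matrix (Fin m) (Fin m) ℂ) (hG : IsMP (A * Bᴴ) G) :
    ((∃ X : Matrix (Fin n) (Fin n) ℂ, X.PosSemidef ∧ A * X = B) ↔
      (LinearMap.range B.mulVecLin ≤ LinearMap.range A.mulVecLin ∧
        (A * Bᴴ).PosSemidef ∧ (A * Bᴴ).rank = B.rank)) ∧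
    ((LinearMap.range B.mulVecLin ≤ LinearMap.range A.mulVecLin ∧
        (A * Bᴴ).PosSemidef ∧ (A * Bᴴ).rank = B.rank) →
      ∀ U : Matrix (Fin n) (Fin n) ℂ, U.PosSemidef →
        (Bᴴ * G * B + (1 - Ad * A) * U * (1 - Ad * A)).PosSemidef ∧
        A * (Bᴴ * G * B + (1 - Ad * A) * U * (1 - Ad * A)) = B) := by
  refine ⟨⟨fun ⟨X, hX, hAX⟩ => solvability_conditions_of_posSemidef_solution hX hAX, ?_⟩, ?_⟩
  · rintro ⟨-, hPSD, hrank⟩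
    exact ⟨_, posSemidef_solution_of_solvability_conditions hAd hG hPSD hrank PosSemidef.zero⟩
  · rintro ⟨-, hPSD, hrank⟩ U hU
    exact posSemidef_solution_of_solvability_conditions hAd hG hPSD hrank hU
end

section
/- Let A ∈ ℂ^{m×m} be Hermitian and B ∈ ℂ^{m×n}. Then the maximum of r(A - B·X·B*) over all Hermitian X ∈ ℂ^{n×n} equals r[A, B], and the minimum equals 2·r[A, B] - r([[A, B],[B*, 0]]). -/
/-!
Let `P` be the orthogonal projection onto the column space of `B` and `E = 1 - P`. As `X` runs
over the Hermitian matrices, `B X Bᴴ` runs over the matrices `P W P` with `W` Hermitian, and block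
elimination gives `r[A, B] = r(E A) + r B` and `r[[A, B], [Bᴴ, 0]] = r(E A E) + 2 r B`.
Both bounds hold for every `X`: `A - B X Bᴴ = [A, B] [1; -X Bᴴ]`, and the Frobenius inequality
yields `r[A, B] + r[A; Bᴴ] ≤ r[[A, B], [Bᴴ, 0]] + r(A - B X Bᴴ)`.
For attainment, a congruence fixing `P` brings `A - P W P` to `D + K + Kᴴ + P (W₀ - W) P`, where
`D = E A E` and `K = P K E` vanishes on the range of `D`. Then `r(E A) = r D + r K`, and the rank
is `r D + 2 r K` at `W = W₀` and `r D + r K + r P` at `W = W₀ - 1`.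
-/

open Matrix ComplexOrder

theorem LinearMap.finrank_map_add_finrank_inf_ker {K V W : Type*} [Field K] [AddCommGroup V]
    [Module K V] [AddCommGroup W] [Module K W] [FiniteDimensional K V] (f : V →ₗ[K] W)
    (p : Submodule K V) :
    Module.finrank K (p.map f) + Module.finrank K ↥(p ⊓ LinearMap.ker f) =
      Module.finrank K p := by
  rw [← Submodule.map_comap_subtype, Submodule.finrank_map_subtype_eq,
    ← LinearMap.ker_domRestrict, ← LinearMap.range_domRestrict]
  exact (f.domRestrict p).finrank_range_add_finrank_ker

namespace Matrix

section CommRing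

variable {R : Type*} [CommRing R] {m n p : Type*}

theorem isUnit_det_fromBlocks_zero₁₂_one [Fintype n] [DecidableEq n] [Fintype p]
    [DecidableEq p] (Y : Matrix p n R) :
    IsUnit (fromBlocks (1 : Matrix n n R) 0 Y 1).det := by
  simp

theorem isUnit_det_fromBlocks_zero₂₁_one [Fintype n] [DecidableEq n] [Fintype p]
    [DecidableEq p] (Y : Matrix n p R) :
    IsUnit (fromBlocks (1 : Matrix n n R) Y 0 (1 : Matrix p p R)).det := by
  simp

theorem rank_neg_s10 [Fintype n] (X : Matrix m n R) : (-X).rank = X.rank := by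
  rw [← neg_one_smul R X, rank_smul_of_mem_nonZeroDivisors]
  exact isUnit_one.neg.mem_nonZeroDivisors

theorem rank_mul_mul_conjTranspose_of_isUnit_det [StarRing R] [Fintype n] [DecidableEq n]
    {T : Matrix n n R} (hT : IsUnit T.det) (X : Matrix n n R) : (T * X * Tᴴ).rank = X.rank := by
  rw [rank_mul_eq_left_of_isUnit_det _ _ (by simpa only [det_conjTranspose] using hT.star),
    rank_mul_eq_right_of_isUnit_det _ _ hT]

end CommRing

section Field

variable {K : Type*} [Field K] {l m n p q : Type*}

theorem rank_mul_add_rank_mul_le [Fintype m] [Fintype n] [Fintype p] (X : Matrix l m K)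
    (Y : Matrix m n K) (Z : Matrix n p K) :
    (X * Y).rank + (Y * Z).rank ≤ Y.rank + (X * Y * Z).rank := by
  have hle : LinearMap.range (Y * Z).mulVecLin ≤ LinearMap.range Y.mulVecLin := by
    rw [mulVecLin_mul]
    exact LinearMap.range_comp_le_range _ _
  have hXY := X.mulVecLin.finrank_map_add_finrank_inf_ker (LinearMap.range Y.mulVecLin)
  have hXYZ := X.mulVecLin.finrank_map_add_finrank_inf_ker (LinearMap.range (Y * Z).mulVecLin)
  have hker := Submodule.finrank_mono (inf_le_inf_right (LinearMap.ker X.mulVecLin) hle)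
  rw [← LinearMap.range_comp, ← mulVecLin_mul] at hXY hXYZ
  rw [rank, rank, rank, rank, Matrix.mul_assoc]
  omega

theorem rank_sub_mul_mul_le_rank_fromCols [Fintype n] [Fintype p] [Fintype q] [DecidableEq n]
    (A : Matrix m n K) (B : Matrix m p K) (X : Matrix p q K) (C : Matrix q n K) :
    (A - B * X * C).rank ≤ (fromCols A B).rank := by
  have : A - B * X * C = fromCols A B * fromRows (1 : Matrix n n K) (-(X * C)) := by
    rw [fromCols_mul_fromRows, Matrix.mul_one, Matrix.mul_neg, Matrix.mul_assoc, sub_eq_add_neg]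
  rw [this]
  exact rank_mul_le_left _ _

/-- The Frobenius inequality for `[1, 0] * N * [1; 0]`, where `N = [[A - B X C, B], [C, 0]]` has
the rank of `[[A, B], [C, 0]]`. -/
theorem rank_fromCols_add_rank_fromRows_le [Fintype m] [Fintype n] [Fintype p] [Fintype q]
    [DecidableEq m] [DecidableEq n] [DecidableEq p] [DecidableEq q] (A : Matrix m n K)
    (B : Matrix m p K) (C : Matrix q n K) (X : Matrix p q K) :
    (fromCols A B).rank + (fromRows A C).rank ≤
      (fromBlocks A B C 0).rank + (A - B * X * C).rank := by
  set D := A - B * X * C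
  set R : Matrix (n ⊕ p) (n ⊕ p) K := fromBlocks 1 0 (-(X * C)) 1
  have hcols : fromCols A B * R = fromCols D B := by
    simp [R, fromCols_mul_fromBlocks, D, sub_eq_add_neg, Matrix.mul_assoc]
  have hrows : (fromBlocks 1 (-(B * X)) 0 1 : Matrix (m ⊕ q) (m ⊕ q) K) * fromRows A C =
      fromRows D C := by
    simp [fromBlocks_mul_fromRows, D, sub_eq_add_neg, Matrix.mul_assoc]
  have hblocks : fromBlocks A B C 0 * R = fromBlocks D B C 0 := by
    simp [R, fromBlocks_multiply, D, sub_eq_add_neg, Matrix.mul_assoc]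
  have key := rank_mul_add_rank_mul_le (fromCols (1 : Matrix m m K) (0 : Matrix m q K))
    (fromBlocks D B C 0) (fromRows (1 : Matrix n n K) (0 : Matrix p n K))
  simp only [fromCols_mul_fromBlocks, fromBlocks_mul_fromRows, fromCols_mul_fromRows,
    Matrix.one_mul, Matrix.mul_one, Matrix.zero_mul, Matrix.mul_zero, add_zero] at key
  rwa [← hcols, ← hrows, ← hblocks,
    rank_mul_eq_left_of_isUnit_det _ _ (isUnit_det_fromBlocks_zero₁₂_one _),
    rank_mul_eq_left_of_isUnit_det _ _ (isUnit_det_fromBlocks_zero₁₂_one _),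
    rank_mul_eq_right_of_isUnit_det _ _ (isUnit_det_fromBlocks_zero₂₁_one _)] at key

theorem rank_mul_of_mul_mul_eq_self [Fintype m] [Fintype n] {B : Matrix m n K}
    {Bp : Matrix n m K} (h : B * Bp * B = B) : (B * Bp).rank = B.rank :=
  le_antisymm (rank_mul_le_left _ _) ((congrArg rank h).symm.le.trans (rank_mul_le_left _ _))

end Field

section StarOrderedField

variable {R : Type*} [Field R] [PartialOrder R] [StarRing R] [StarOrderedRing R] {m n p q : Type*}

theorem range_mulVecLin_self_mul_conjTranspose [Fintype m] [Fintype n] (X : Matrix m n R) :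
    LinearMap.range (X * Xᴴ).mulVecLin = LinearMap.range X.mulVecLin := by
  refine Submodule.eq_of_le_of_finrank_eq ?_ (rank_self_mul_conjTranspose X)
  rw [mulVecLin_mul]
  exact LinearMap.range_comp_le_range _ _

theorem rank_add_of_conjTranspose_mul_eq_zero [Fintype m] [Fintype n] {X Y : Matrix m n R}
    (h₁ : Xᴴ * Y = 0) (h₂ : X * Yᴴ = 0) : (X + Y).rank = X.rank + Y.rank := by
  set U := LinearMap.range X.mulVecLin
  set V := LinearMap.range Y.mulVecLin
  have hUV : U ⊓ V = ⊥ := by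
    refine (Submodule.eq_bot_iff _).2 ?_
    rintro _ ⟨⟨a, rfl⟩, ⟨b, hb⟩⟩
    have : (Xᴴ * X) *ᵥ a = 0 := by
      simp only [mulVecLin_apply] at hb
      rw [← mulVec_mulVec, ← hb, mulVec_mulVec, h₁, zero_mulVec]
    rwa [← mulVecLin_apply, ← LinearMap.mem_ker, ker_mulVecLin_conjTranspose_mul_self] at this
  have hYX : Y * Xᴴ = 0 := by simpa using congrArg conjTranspose h₂
  have hrange : ∀ Z : Matrix m n R, (X + Y) * Zᴴ = Z * Zᴴ →
      LinearMap.range Z.mulVecLin ≤ LinearMap.range (X + Y).mulVecLin := fun Z hZ => by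
    rw [← range_mulVecLin_self_mul_conjTranspose, ← hZ, mulVecLin_mul]
    exact LinearMap.range_comp_le_range _ _
  have hsup : LinearMap.range (X + Y).mulVecLin = U ⊔ V := by
    refine le_antisymm (by rw [mulVecLin_add]; exact LinearMap.range_add_le _ _) (sup_le ?_ ?_)
    · exact hrange X (by rw [Matrix.add_mul, hYX, add_zero])
    · exact hrange Y (by rw [Matrix.add_mul, h₂, zero_add])
  have := Submodule.finrank_sup_add_finrank_inf_eq U V
  rwa [hUV, finrank_bot, add_zero, ← hsup] at this

theorem rank_fromCols_of_conjTranspose_mul_eq_zero [Fintype m] [Fintype n] [Fintype p]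
    {X : Matrix m n R} {Y : Matrix m p R} (h : Xᴴ * Y = 0) :
    (fromCols X Y).rank = X.rank + Y.rank := by
  rw [← rank_self_mul_conjTranspose, conjTranspose_fromCols_eq_fromRows_conjTranspose,
    fromCols_mul_fromRows, rank_add_of_conjTranspose_mul_eq_zero, rank_self_mul_conjTranspose,
    rank_self_mul_conjTranspose]
  · simp [Matrix.mul_assoc, ← Matrix.mul_assoc Xᴴ, h]
  · simp [Matrix.mul_assoc, ← Matrix.mul_assoc Xᴴ, h]

theorem rank_fromRows_of_mul_conjTranspose_eq_zero [Fintype m] [Fintype n] [Fintype p]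
    {X : Matrix m n R} {Y : Matrix p n R} (h : X * Yᴴ = 0) :
    (fromRows X Y).rank = X.rank + Y.rank := by
  rw [← rank_conjTranspose, conjTranspose_fromRows_eq_fromCols_conjTranspose,
    rank_fromCols_of_conjTranspose_mul_eq_zero (by rwa [conjTranspose_conjTranspose]),
    rank_conjTranspose, rank_conjTranspose]

theorem rank_fromBlocks_zero₂₂ [Fintype m] [Fintype n] [Fintype p] [Fintype q]
    {A : Matrix m n R} {B : Matrix m p R} {C : Matrix q n R} (hB : Aᴴ * B = 0)
    (hC : A * Cᴴ = 0) : (fromBlocks A B C 0).rank = A.rank + B.rank + C.rank := by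
  rw [← fromCols_fromRows_eq_fromBlocks, rank_fromCols_of_conjTranspose_mul_eq_zero,
    rank_fromRows_of_mul_conjTranspose_eq_zero hC, rank_fromRows_of_mul_conjTranspose_eq_zero,
    rank_zero]
  · omega
  · simp
  · simp [conjTranspose_fromRows_eq_fromCols_conjTranspose, fromCols_mul_fromRows, hB]

section Projection

variable [Fintype m] [Fintype n] [DecidableEq m] [DecidableEq n] {B : Matrix m n R}
  {Bp : Matrix n m R}

theorem rank_fromCols_eq_of_mul_mul_eq_self [Fintype p] [DecidableEq p] (h : B * Bp * B = B)
    (hP : (B * Bp).IsHermitian) (A : Matrix m p R) :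
    (fromCols A B).rank = ((1 - B * Bp) * A).rank + B.rank := by
  have hcols : fromCols A B * (fromBlocks 1 0 (-(Bp * A)) 1 : Matrix (p ⊕ n) (p ⊕ n) R) =
      fromCols ((1 - B * Bp) * A) B := by
    simp [fromCols_mul_fromBlocks, sub_eq_add_neg, Matrix.add_mul, Matrix.mul_assoc]
  have hEB : ((1 - B * Bp) * A)ᴴ * B = 0 := by
    rw [conjTranspose_mul, (isHermitian_one.sub hP).eq, Matrix.mul_assoc, Matrix.sub_mul,
      Matrix.one_mul, h, sub_self, Matrix.mul_zero]
  rw [← rank_mul_eq_left_of_isUnit_det _ _ (isUnit_det_fromBlocks_zero₁₂_one (-(Bp * A))), hcols,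
    rank_fromCols_of_conjTranspose_mul_eq_zero hEB]

theorem rank_fromBlocks_eq_of_mul_mul_eq_self (h : B * Bp * B = B) (hP : (B * Bp).IsHermitian)
    (A : Matrix m m R) :
    (fromBlocks A B Bᴴ 0).rank = ((1 - B * Bp) * A * (1 - B * Bp)).rank + 2 * B.rank := by
  set E := 1 - B * Bp
  have hEB : E * B = 0 := by rw [Matrix.sub_mul, Matrix.one_mul, h, sub_self]
  have hEH : Eᴴ = E := (isHermitian_one.sub hP).eq
  have hcols : fromBlocks A B Bᴴ 0 * fromBlocks 1 0 (-(Bp * A)) 1 =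
      fromBlocks (E * A) B Bᴴ 0 := by
    simp [E, fromBlocks_multiply, sub_eq_add_neg, Matrix.add_mul, Matrix.mul_assoc]
  have hrows : fromBlocks 1 (-(E * A * Bpᴴ)) 0 1 * fromBlocks (E * A) B Bᴴ 0 =
      fromBlocks (E * A * E) B Bᴴ 0 := by
    have : Bpᴴ * Bᴴ = B * Bp := by rw [← conjTranspose_mul, hP.eq]
    simp only [fromBlocks_multiply, Matrix.one_mul, Matrix.zero_mul, Matrix.mul_zero, add_zero,
      zero_add, Matrix.neg_mul, Matrix.mul_assoc, this]
    congr 1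
    simp only [E]
    noncomm_ring
  rw [← rank_mul_eq_left_of_isUnit_det _ _ (isUnit_det_fromBlocks_zero₁₂_one _), hcols,
    ← rank_mul_eq_right_of_isUnit_det _ _ (isUnit_det_fromBlocks_zero₂₁_one _), hrows,
    rank_fromBlocks_zero₂₂, rank_conjTranspose]
  · omega
  · simp only [conjTranspose_mul, hEH, Matrix.mul_assoc, hEB, Matrix.mul_zero]
  · simp only [conjTranspose_conjTranspose, Matrix.mul_assoc, hEB, Matrix.mul_zero]

end Projection

section Corner

variable [Fintype m] {P D K : Matrix m m R}

theorem rank_add_conjTranspose_of_mul_eq_zero (hDP : D * P = 0) (hPK : P * K = K)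
    (hKD : K * D = 0) : (D + Kᴴ).rank = D.rank + K.rank := by
  rw [rank_add_of_conjTranspose_mul_eq_zero, rank_conjTranspose]
  · rw [← conjTranspose_mul, hKD, conjTranspose_zero]
  · rw [conjTranspose_conjTranspose, ← hPK, ← Matrix.mul_assoc, hDP, Matrix.zero_mul]

theorem rank_add_add_conjTranspose (hD : D.IsHermitian) (hDP : D * P = 0) (hPK : P * K = K)
    (hKP : K * P = 0) (hKD : K * D = 0) : (D + K + Kᴴ).rank = D.rank + 2 * K.rank := by
  have hDK : D * K = 0 := by rw [← hPK, ← Matrix.mul_assoc, hDP, Matrix.zero_mul]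
  have hDKH : D * Kᴴ = 0 := by rw [← hD.eq, ← conjTranspose_mul, hKD, conjTranspose_zero]
  have hKK : K * K = 0 :=
    calc K * K = K * P * K := by rw [Matrix.mul_assoc, hPK]
      _ = 0 := by rw [hKP, Matrix.zero_mul]
  rw [add_assoc, rank_add_of_conjTranspose_mul_eq_zero, rank_add_of_conjTranspose_mul_eq_zero,
    rank_conjTranspose]
  · omega
  · rw [← conjTranspose_mul, hKK, conjTranspose_zero]
  · rw [conjTranspose_conjTranspose, hKK]
  · rw [hD.eq, Matrix.mul_add, hDK, hDKH, add_zero]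
  · rw [conjTranspose_add, conjTranspose_conjTranspose, Matrix.mul_add, hDKH, hDK, add_zero]

theorem rank_add_add_conjTranspose_add [DecidableEq m] (hP : P.IsHermitian) (hD : D.IsHermitian)
    (hDP : D * P = 0) (hPK : P * K = K) (hKP : K * P = 0) (hKD : K * D = 0) :
    (D + K + Kᴴ + P).rank = D.rank + K.rank + P.rank := by
  have hDK : D * K = 0 := by rw [← hPK, ← Matrix.mul_assoc, hDP, Matrix.zero_mul]
  have hDKH : D * Kᴴ = 0 := by rw [← hD.eq, ← conjTranspose_mul, hKD, conjTranspose_zero]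
  have hKK : K * K = 0 :=
    calc K * K = K * P * K := by rw [Matrix.mul_assoc, hPK]
      _ = 0 := by rw [hKP, Matrix.zero_mul]
  have hKHKH : Kᴴ * Kᴴ = 0 := by rw [← conjTranspose_mul, hKK, conjTranspose_zero]
  have hKHP : Kᴴ * P = Kᴴ := by simpa [hP.eq] using congrArg conjTranspose hPK
  have hPKH : P * Kᴴ = 0 := by simpa [hP.eq] using congrArg conjTranspose hKP
  have hfactor : (1 + Kᴴ) * (P + -(Kᴴ * K)) * (1 + K) = K + Kᴴ + P :=
    calc _ = P + P * K - Kᴴ * K - Kᴴ * (K * K) + Kᴴ * P * (1 + K) - Kᴴ * Kᴴ * K * (1 + K) := by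
          noncomm_ring
      _ = K + Kᴴ + P := by rw [hPK, hKK, hKHP, hKHKH]; noncomm_ring
  have hunit : ∀ N : Matrix m m R, N * N = 0 → IsUnit (1 + N).det := fun N hN =>
    isUnit_det_of_right_inverse (B := 1 - N)
      (by rw [show (1 + N) * (1 - N) = 1 - N * N by noncomm_ring, hN, sub_zero])
  rw [show D + K + Kᴴ + P = D + (K + Kᴴ + P) by abel, rank_add_of_conjTranspose_mul_eq_zero,
    ← hfactor, rank_mul_eq_left_of_isUnit_det _ _ (hunit K hKK),
    rank_mul_eq_right_of_isUnit_det _ _ (hunit Kᴴ hKHKH), rank_add_of_conjTranspose_mul_eq_zero,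
    rank_neg_s10, rank_conjTranspose_mul_self]
  · omega
  · rw [hP.eq, Matrix.mul_neg, ← Matrix.mul_assoc, hPKH, Matrix.zero_mul, neg_zero]
  · rw [conjTranspose_neg, conjTranspose_mul, conjTranspose_conjTranspose, Matrix.mul_neg,
      ← Matrix.mul_assoc, hPKH, Matrix.zero_mul, neg_zero]
  · rw [hD.eq, Matrix.mul_add, Matrix.mul_add, hDK, hDKH, hDP, add_zero, add_zero]
  · rw [conjTranspose_add, conjTranspose_add, conjTranspose_conjTranspose, hP.eq, Matrix.mul_add,
      Matrix.mul_add, hDK, hDKH, hDP, add_zero, add_zero]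

end Corner

end StarOrderedField

section RCLike

variable {𝕜 : Type*} [RCLike 𝕜] {m n : Type*}

theorem IsHermitian.exists_pinv [Fintype n] [DecidableEq n] {H : Matrix n n 𝕜}
    (hH : H.IsHermitian) :
    ∃ G : Matrix n n 𝕜, G.IsHermitian ∧ H * G * H = H ∧ G * H * G = G ∧ Commute H G := by
  -- `G = cfc (·⁻¹) H`: the convention `0⁻¹ = 0` makes it a pseudo-inverse, and every function is
  -- continuous on the finite spectrum
  have hc : ∀ f : ℝ → ℝ, ContinuousOn f (spectrum ℝ H) := H.finite_real_spectrum.continuousOn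
  have hmul : ∀ f g : ℝ → ℝ, cfc f H * cfc g H = cfc (fun x => f x * g x) H :=
    fun f g => (cfc_mul f g H (hc f) (hc g)).symm
  have hid : cfc (fun x : ℝ => x) H = H := cfc_id' ℝ H hH.isSelfAdjoint
  refine ⟨cfc (fun x : ℝ => x⁻¹) H, cfc_predicate _ _, ?_, ?_, ?_⟩
  · calc H * cfc (fun x : ℝ => x⁻¹) H * H
        = cfc (fun x : ℝ => x) H * cfc (fun x : ℝ => x⁻¹) H * cfc (fun x : ℝ => x) H := by
          rw [hid]
      _ = H := by rw [hmul, hmul]; simp only [mul_inv_mul_cancel, hid]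
  · calc cfc (fun x : ℝ => x⁻¹) H * H * cfc (fun x : ℝ => x⁻¹) H
        = cfc (fun x : ℝ => x⁻¹) H * cfc (fun x : ℝ => x) H * cfc (fun x : ℝ => x⁻¹) H := by
          rw [hid]
      _ = cfc (fun x : ℝ => x⁻¹) H := by
          rw [hmul, hmul]
          exact cfc_congr fun x _ => by simpa only [inv_inv] using mul_inv_mul_cancel x⁻¹
  · simpa only [hid] using cfc_commute_cfc (fun x : ℝ => x) (fun x : ℝ => x⁻¹) H

theorem exists_mul_mul_eq_self_and_isHermitian_mul [Fintype m] [Fintype n] [DecidableEq n]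
    (B : Matrix m n 𝕜) : ∃ Bp : Matrix n m 𝕜, B * Bp * B = B ∧ (B * Bp).IsHermitian := by
  have hS := isHermitian_conjTranspose_mul_self B
  obtain ⟨G, hG, hSGS, -, -⟩ := hS.exists_pinv
  refine ⟨G * Bᴴ, ?_, by simpa only [Matrix.mul_assoc] using isHermitian_mul_mul_conjTranspose B hG⟩
  have hZ : (B * (G * (Bᴴ * B) - 1))ᴴ * (B * (G * (Bᴴ * B) - 1)) = 0 :=
    calc _ = (G * (Bᴴ * B) - 1)ᴴ * (Bᴴ * B) * (G * (Bᴴ * B) - 1) := by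
          simp only [conjTranspose_mul, Matrix.mul_assoc]
      _ = (Bᴴ * B * G * (Bᴴ * B) - Bᴴ * B) * (G * (Bᴴ * B) - 1) := by
          rw [conjTranspose_sub, conjTranspose_mul, hS.eq, hG.eq, conjTranspose_one]
          noncomm_ring
      _ = 0 := by rw [hSGS, sub_self, Matrix.zero_mul]
  have := conjTranspose_mul_self_eq_zero.1 hZ
  rw [Matrix.mul_sub, Matrix.mul_one, sub_eq_zero] at this
  simpa only [Matrix.mul_assoc] using this

variable [Fintype n] [DecidableEq n] {P A : Matrix n n 𝕜}

theorem exists_pinv_compression (hP : IsStarProjection P) (hA : A.IsHermitian) :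
    ∃ G : Matrix n n 𝕜, G.IsHermitian ∧ G * P = 0 ∧ G * A * G = G ∧
      G * A * ((1 - P) * A * (1 - P)) = (1 - P) * A * (1 - P) := by
  have hEH : (1 - P)ᴴ = 1 - P := hP.one_sub.isSelfAdjoint
  have hEE : (1 - P) * (1 - P) = 1 - P := hP.one_sub.isIdempotentElem
  set D := (1 - P) * A * (1 - P) with hD
  have hDH : D.IsHermitian := by
    rw [hD]; nth_rw 2 [← hEH]; exact isHermitian_mul_mul_conjTranspose _ hA
  have hED : (1 - P) * D = D := by rw [hD, ← Matrix.mul_assoc, ← Matrix.mul_assoc, hEE]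
  obtain ⟨G, hG, hDGD, hGDG, hDG⟩ := hDH.exists_pinv
  have hGE : G * (1 - P) = G :=
    calc G * (1 - P) = G * (D * G) * (1 - P) := by rw [← Matrix.mul_assoc, hGDG]
      _ = G * G * (D * (1 - P)) := by rw [hDG.eq]; simp only [Matrix.mul_assoc]
      _ = G := by
        rw [hD, Matrix.mul_assoc _ _ (1 - P), hEE, ← hD, Matrix.mul_assoc, ← hDG.eq,
          ← Matrix.mul_assoc, hGDG]
  have hEG : (1 - P) * G = G := by simpa [hEH, hG.eq] using congrArg conjTranspose hGE
  have hGD : G * D = G * A * (1 - P) := by simp only [hD, ← Matrix.mul_assoc, hGE]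
  refine ⟨G, hG, by rw [← hGE, Matrix.mul_assoc, hP.one_sub_mul_self, Matrix.mul_zero], ?_, ?_⟩
  · calc G * A * G = G * (1 - P) * A * ((1 - P) * G) := by rw [hGE, hEG]
      _ = G * D * G := by rw [hD]; simp only [Matrix.mul_assoc]
      _ = G := hGDG
  · calc G * A * D = G * A * ((1 - P) * D) := by rw [hED]
      _ = G * D * D := by rw [hGD]; simp only [Matrix.mul_assoc]
      _ = D := by rw [← hDG.eq, hDGD]

/-- The witness is `T = 1 - P A G` with `G` a pseudo-inverse of the corner `(1 - P) A (1 - P)`: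
it removes from the off-diagonal block `P A (1 - P)` the part that factors through the corner. -/
theorem exists_congruence_normalForm (hP : IsStarProjection P) (hA : A.IsHermitian) :
    ∃ T K W₀ : Matrix n n 𝕜, IsUnit T.det ∧ T * P = P ∧ (1 - P) * T = 1 - P ∧
      W₀.IsHermitian ∧ P * K = K ∧ K * P = 0 ∧ K * ((1 - P) * A * (1 - P)) = 0 ∧
      T * A * Tᴴ = P * W₀ * P + (1 - P) * A * (1 - P) + K + Kᴴ := by
  obtain ⟨G, hG, hGP, hGAG, hGAD⟩ := exists_pinv_compression hP hA
  have hPH : Pᴴ = P := hP.isSelfAdjoint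
  have hEP : (1 - P) * P = 0 := hP.one_sub_mul_self
  refine ⟨1 - P * A * G, P * A * (1 - G * A) * (1 - P), A - A * G * A,
    isUnit_det_of_right_inverse (B := 1 + P * A * G) ?_, ?_, ?_, ?_, ?_, ?_, ?_, ?_⟩
  · calc (1 - P * A * G) * (1 + P * A * G) = 1 - P * A * (G * P) * A * G := by noncomm_ring
      _ = 1 := by rw [hGP]; simp
  · calc (1 - P * A * G) * P = P - P * A * (G * P) := by noncomm_ring
      _ = P := by rw [hGP]; simp
  · calc (1 - P) * (1 - P * A * G) = 1 - P - (1 - P) * P * A * G := by noncomm_ring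
      _ = 1 - P := by rw [hEP]; simp
  · exact hA.sub (by simp [IsHermitian, conjTranspose_mul, hA.eq, hG.eq, Matrix.mul_assoc])
  · rw [← Matrix.mul_assoc, ← Matrix.mul_assoc, ← Matrix.mul_assoc, hP.isIdempotentElem]
  · rw [Matrix.mul_assoc, hEP, Matrix.mul_zero]
  · have hEE : (1 - P) * (1 - P) = 1 - P := hP.one_sub.isIdempotentElem
    calc P * A * (1 - G * A) * (1 - P) * ((1 - P) * A * (1 - P))
        = P * A * (1 - G * A) * ((1 - P) * (1 - P) * A * (1 - P)) := by
          simp only [Matrix.mul_assoc]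
      _ = P * A * ((1 - P) * A * (1 - P) - G * A * ((1 - P) * A * (1 - P))) := by
          rw [hEE]; noncomm_ring
      _ = 0 := by rw [hGAD, sub_self, Matrix.mul_zero]
  · simp only [conjTranspose_mul, conjTranspose_sub, conjTranspose_one, hPH, hA.eq, hG.eq]
    calc _ = A - P * A * G * A - A * G * A * P + P * A * (G * A * G) * A * P := by noncomm_ring
      _ = _ := by rw [hGAG]; noncomm_ring

theorem exists_isHermitian_rank_sub_mul_mul (hP : IsStarProjection P) (hA : A.IsHermitian) :
    ∃ W₀ : Matrix n n 𝕜, W₀.IsHermitian ∧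
      (A - P * W₀ * P).rank + ((1 - P) * A * (1 - P)).rank = 2 * ((1 - P) * A).rank ∧
      (A - P * (W₀ - 1) * P).rank = ((1 - P) * A).rank + P.rank := by
  obtain ⟨T, K, W₀, hT, hTP, hET, hW₀, hPK, hKP, hKD, hTAT⟩ := exists_congruence_normalForm hP hA
  have hPH : P.IsHermitian := hP.isSelfAdjoint
  have hEH : (1 - P)ᴴ = 1 - P := hP.one_sub.isSelfAdjoint
  have hEP : (1 - P) * P = 0 := hP.one_sub_mul_self
  set D := (1 - P) * A * (1 - P) with hD
  have hDH : D.IsHermitian := by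
    rw [hD]; nth_rw 2 [← hEH]; exact isHermitian_mul_mul_conjTranspose _ hA
  have hDP : D * P = 0 := by rw [hD, Matrix.mul_assoc, hEP, Matrix.mul_zero]
  have hED : (1 - P) * D = D := by
    rw [hD, ← Matrix.mul_assoc, ← Matrix.mul_assoc, hP.one_sub.isIdempotentElem.eq]
  have hPT : P * Tᴴ = P := by rw [← hPH.eq, ← conjTranspose_mul, hTP]
  have hcongr : ∀ W, T * (A - P * W * P) * Tᴴ = D + K + Kᴴ + P * (W₀ - W) * P := fun W =>
    calc T * (A - P * W * P) * Tᴴ = T * A * Tᴴ - T * P * W * (P * Tᴴ) := by noncomm_ring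
      _ = _ := by rw [hTAT, hTP, hPT]; noncomm_ring
  have hEA : ((1 - P) * A).rank = D.rank + K.rank := by
    have hPKH : P * Kᴴ = 0 := by simpa [hPH.eq] using congrArg conjTranspose hKP
    have hcorner : (1 - P) * (T * A * Tᴴ) = D + Kᴴ :=
      calc _ = (1 - P) * P * W₀ * P + (1 - P) * D + (K - P * K) + (Kᴴ - P * Kᴴ) := by
            rw [hTAT]; noncomm_ring
        _ = D + Kᴴ := by rw [hEP, hPK, hPKH, hED]; simp
    rw [← rank_add_conjTranspose_of_mul_eq_zero hDP hPK hKD, ← hcorner, ← Matrix.mul_assoc,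
      ← Matrix.mul_assoc, hET, rank_mul_eq_left_of_isUnit_det Tᴴ ((1 - P) * A)
      (by simpa only [det_conjTranspose] using hT.star)]
  refine ⟨W₀, hW₀, ?_, ?_⟩
  · rw [← rank_mul_mul_conjTranspose_of_isUnit_det hT, hcongr, sub_self, Matrix.mul_zero,
      Matrix.zero_mul, add_zero, rank_add_add_conjTranspose hDH hDP hPK hKP hKD, hEA]
    ring
  · rw [← rank_mul_mul_conjTranspose_of_isUnit_det hT, hcongr, sub_sub_cancel, Matrix.mul_one,
      hP.isIdempotentElem.eq, rank_add_add_conjTranspose_add hPH hDH hDP hPK hKP hKD, hEA]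

end RCLike

end Matrix

theorem stmt10 (m n : ℕ) (A : Matrix (Fin m) (Fin m) ℂ) (hA : A.IsHermitian)
    (B : Matrix (Fin m) (Fin n) ℂ) :
    IsGreatest {k | ∃ X : Matrix (Fin n) (Fin n) ℂ, X.IsHermitian ∧
        k = (A - B * X * Bᴴ).rank}
      ((fromCols A B).rank) ∧
    IsLeast {k | ∃ X : Matrix (Fin n) (Fin n) ℂ, X.IsHermitian ∧
        k = (A - B * X * Bᴴ).rank}
      (2 * (fromCols A B).rank
        - (fromBlocks A B Bᴴ (0 : Matrix (Fin n) (Fin n) ℂ)).rank) := by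
  obtain ⟨Bp, hBp, hPH⟩ := exists_mul_mul_eq_self_and_isHermitian_mul B
  have hP : IsStarProjection (B * Bp) := ⟨by rw [IsIdempotentElem, ← Matrix.mul_assoc, hBp], hPH⟩
  obtain ⟨W₀, hW₀, hmin, hmax⟩ := exists_isHermitian_rank_sub_mul_mul hP hA
  have hcols := rank_fromCols_eq_of_mul_mul_eq_self hBp hPH A
  have hblocks := rank_fromBlocks_eq_of_mul_mul_eq_self hBp hPH A
  have hrank := rank_mul_of_mul_mul_eq_self hBp
  have hrows : (fromRows A Bᴴ).rank = (fromCols A B).rank := by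
    rw [← rank_conjTranspose, conjTranspose_fromRows_eq_fromCols_conjTranspose, hA.eq,
      conjTranspose_conjTranspose]
  have hlift : ∀ W, W.IsHermitian →
      (Bp * W * Bpᴴ).IsHermitian ∧ B * (Bp * W * Bpᴴ) * Bᴴ = B * Bp * W * (B * Bp) := by
    have : Bpᴴ * Bᴴ = B * Bp := by rw [← conjTranspose_mul, hPH.eq]
    exact fun W hW =>
      ⟨isHermitian_mul_mul_conjTranspose Bp hW, by simp only [Matrix.mul_assoc, this]⟩
  obtain ⟨hXmax, hmax'⟩ := hlift _ (hW₀.sub isHermitian_one)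
  obtain ⟨hXmin, hmin'⟩ := hlift _ hW₀
  refine ⟨⟨⟨_, hXmax, ?_⟩, ?_⟩, ⟨⟨_, hXmin, ?_⟩, ?_⟩⟩
  · rw [hmax']; omega
  · rintro _ ⟨X, -, rfl⟩
    exact rank_sub_mul_mul_le_rank_fromCols A B X Bᴴ
  · rw [hmin']; omega
  · rintro _ ⟨X, -, rfl⟩
    have := rank_fromCols_add_rank_fromRows_le A B Bᴴ X
    omega
end

section
/- Let A ∈ ℂ^{m×m} be Hermitian and B ∈ ℂ^{m×n}. Then the maximum of i_±(A - B·X·B*) over Hermitian X equals i_±([[A, B],[B*, 0]]), and the minimum of i_±(A - B·X·B*) over Hermitian X equals r[A, B] - i_∓([[A, B],[B*, 0]]). -/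
open Matrix ComplexOrder

/-!
By Sylvester's law of inertia in variational form, `i₊(H)` is the largest dimension of a subspace
on which `x ↦ x* H x` is positive definite, and `i₋(H) = i₊(-H)`.

On the graph of `v ↦ (t/2) B* v - ½ X B* v`, the form of `M = [[A, B], [B*, 0]]` is
`v* (A - B X B*) v + t ‖B* v‖²`. If `A - B X B*` is positive (negative) on the nonzero vectors of a
subspace `T` that are killed by `B*`, then by compactness of the unit sphere of `T` (Finsler's
lemma) some `t` makes this form positive (negative) on all of `T`, so `dim T ≤ i±(M)`; in
particular `i±(A - B X B*) ≤ i±(M)`. Conversely, projecting a maximal positive subspace of `M` onto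
its first block gives a subspace of the same dimension on which `A` is positive where `B* v = 0`;
the same compactness argument makes `A + t B B*` positive on it, so `X = -t I` attains the maximum.

For the minimum, let `C = A - B X B*`. The nonpositive eigenspace of `C` (dimension `m - i₊(C)`)
contains a subspace of dimension at least `r[A, B] - i₊(C)` meeting `ker C ∩ ker B*` (dimension
`m - r[A, B]`) only in `0`; on it `C` is negative at nonzero vectors killed by `B*`, whence
`r[A, B] ≤ i₊(C) + i₋(M)`. Equality holds at an `X` maximizing `i₋(C)`, because
`i₊(C) + i₋(C) = r(C) ≤ r[A, B]`. The statements for `i₋` are those for `i₊` applied to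
`(-A, -B, -X)`.
-/

open Complex

section Generic

lemma exists_le_inf_eq_bot_finrank_le {𝕜 V : Type*} [DivisionRing 𝕜] [AddCommGroup V]
    [Module 𝕜 V] [FiniteDimensional 𝕜 V] (S K : Submodule 𝕜 V) :
    ∃ T ≤ S, T ⊓ K = ⊥ ∧ Module.finrank 𝕜 S ≤ Module.finrank 𝕜 T + Module.finrank 𝕜 K := by
  obtain ⟨K', hK'⟩ := K.exists_isCompl
  refine ⟨S ⊓ K', inf_le_left, by rw [inf_assoc, inf_comm K', hK'.inf_eq_bot, inf_bot_eq], ?_⟩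
  have := Submodule.finrank_sup_add_finrank_inf_eq S K'
  have := Submodule.finrank_add_eq_of_isCompl hK'
  have := (S ⊔ K').finrank_le
  omega

variable {E F : Type*} [AddCommGroup E] [Module ℂ E] [AddCommGroup F] [Module ℂ F]

def posDims (Q : E → ℝ) : Set ℕ :=
  {d | ∃ V : Submodule ℂ E, Module.finrank ℂ V = d ∧ ∀ x ∈ V, x ≠ 0 → 0 < Q x}

lemma posDims_comp_subset (Q : F → ℝ) {L : E →ₗ[ℂ] F} (hL : Function.Injective L) :
    posDims (Q ∘ L) ⊆ posDims Q := by
  rintro _ ⟨V, rfl, hV⟩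
  refine ⟨V.map L, (Submodule.equivMapOfInjective L hL V).finrank_eq.symm, ?_⟩
  rintro _ ⟨x, hx, rfl⟩ hx0
  exact hV x hx (by rintro rfl; exact hx0 (map_zero L))

lemma posDims_comp_linearEquiv (Q : F → ℝ) (e : E ≃ₗ[ℂ] F) : posDims (Q ∘ e) = posDims Q := by
  refine (posDims_comp_subset Q e.injective).antisymm ?_
  simpa [Function.comp_def] using posDims_comp_subset (Q ∘ e) e.symm.injective

end Generic

variable {ι κ : Type*}

lemma fromBlocks_neg_neg (A : Matrix ι ι ℂ) (B : Matrix ι κ ℂ) :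
    fromBlocks (-A) (-B) (-B)ᴴ (0 : Matrix κ κ ℂ) = -fromBlocks A B Bᴴ 0 := by
  simp [fromBlocks_neg, conjTranspose_neg]

lemma isHermitian_fromBlocks_neg {A : Matrix ι ι ℂ} {B : Matrix ι κ ℂ}
    (hM : (fromBlocks A B Bᴴ 0).IsHermitian) :
    (fromBlocks (-A) (-B) (-B)ᴴ (0 : Matrix κ κ ℂ)).IsHermitian := by
  rw [fromBlocks_neg_neg]
  exact hM.neg

lemma neg_sub_neg_mul_mul [Fintype κ] (A : Matrix ι ι ℂ) (B : Matrix ι κ ℂ) (X : Matrix κ κ ℂ) :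
    -A - (-B) * X * (-B)ᴴ = -(A - B * (-X) * Bᴴ) := by
  simp only [conjTranspose_neg, Matrix.neg_mul, Matrix.mul_neg, neg_neg, neg_sub]
  abel

section Coordinates

lemma mem_ker_funLeft_subtype_val {p : ι → Prop} {y : ι → ℂ} :
    y ∈ LinearMap.ker (LinearMap.funLeft ℂ ℂ ((↑) : {i // p i} → ι)) ↔ ∀ i, p i → y i = 0 := by
  simp [funext_iff, LinearMap.funLeft_apply]

lemma mul_normSq_nonpos {μ : ι → ℝ} {y : ι → ℂ} (hy : ∀ i, 0 < μ i → y i = 0) (i : ι) :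
    μ i * normSq (y i) ≤ 0 := by
  by_cases hi : 0 < μ i
  · simp [hy i hi]
  · exact mul_nonpos_of_nonpos_of_nonneg (not_lt.1 hi) (normSq_nonneg _)

variable [Fintype ι]

lemma finrank_ker_funLeft_subtype_val (p : ι → Prop) [DecidablePred p] :
    Module.finrank ℂ (LinearMap.ker (LinearMap.funLeft ℂ ℂ ((↑) : {i // p i} → ι)))
      + Fintype.card {i // p i} = Fintype.card ι := by
  have h := LinearMap.finrank_range_add_finrank_ker (LinearMap.funLeft ℂ ℂ ((↑) : {i // p i} → ι))
  rw [LinearMap.range_eq_top.2 (LinearMap.funLeft_surjective_of_injective _ _ _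
    Subtype.val_injective), finrank_top, Module.finrank_fintype_fun_eq_card,
    Module.finrank_fintype_fun_eq_card] at h
  omega

noncomputable def diagForm (μ : ι → ℝ) (y : ι → ℂ) : ℝ := ∑ i, μ i * normSq (y i)

variable (μ : ι → ℝ)

lemma diagForm_nonpos {y : ι → ℂ} (hy : ∀ i, 0 < μ i → y i = 0) : diagForm μ y ≤ 0 :=
  Finset.sum_nonpos fun i _ => mul_normSq_nonpos hy i

lemma eq_zero_of_diagForm_eq_zero {y : ι → ℂ} (hy : ∀ i, 0 < μ i → y i = 0)
    (h : diagForm μ y = 0) (i : ι) (hi : μ i ≠ 0) : y i = 0 := by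
  have := (Finset.sum_eq_zero_iff_of_nonpos fun j _ => mul_normSq_nonpos hy j).1 h i
    (Finset.mem_univ i)
  simpa [hi] using this

lemma diagForm_pos {y : ι → ℂ} (hy : ∀ i, μ i ≤ 0 → y i = 0) (hy0 : y ≠ 0) :
    0 < diagForm μ y := by
  obtain ⟨i, hi⟩ := Function.ne_iff.1 hy0
  have hμi : 0 < μ i := not_le.1 fun h => hi (hy i h)
  refine Finset.sum_pos' (fun j _ => ?_) ⟨i, Finset.mem_univ i, mul_pos hμi (normSq_pos.2 hi)⟩
  by_cases hj : μ j ≤ 0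
  · simp [hy j hj]
  · exact mul_nonneg (not_le.1 hj).le (normSq_nonneg _)

theorem isGreatest_posDims_diagForm :
    IsGreatest (posDims (diagForm μ)) (Fintype.card {i // 0 < μ i}) := by
  refine ⟨⟨LinearMap.ker (LinearMap.funLeft ℂ ℂ ((↑) : {i // μ i ≤ 0} → ι)), ?_, ?_⟩, ?_⟩
  · have h := finrank_ker_funLeft_subtype_val fun i => μ i ≤ 0
    have := Fintype.card_subtype_le fun i => μ i ≤ 0
    have : Fintype.card {i // 0 < μ i} = Fintype.card ι - Fintype.card {i // μ i ≤ 0} := by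
      simpa [not_le] using Fintype.card_subtype_compl fun i => μ i ≤ 0
    omega
  · exact fun y hy => diagForm_pos μ (mem_ker_funLeft_subtype_val.1 hy)
  · rintro _ ⟨V, rfl, hV⟩
    let r := (LinearMap.funLeft ℂ ℂ ((↑) : {i // 0 < μ i} → ι)).comp V.subtype
    have hr : Function.Injective r := by
      rw [← LinearMap.ker_eq_bot, Submodule.eq_bot_iff]
      intro y hy
      by_contra hy0
      have hy0' : (y : ι → ℂ) ≠ 0 := by simpa using hy0
      exact (hV y y.2 hy0').not_ge (diagForm_nonpos μ (mem_ker_funLeft_subtype_val.1 hy))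
    simpa using LinearMap.finrank_le_finrank_of_injective hr

end Coordinates

variable [Fintype ι]

noncomputable def quadForm (A : Matrix ι ι ℂ) (x : ι → ℂ) : ℝ := (star x ⬝ᵥ A *ᵥ x).re

lemma quadForm_neg (A : Matrix ι ι ℂ) : quadForm (-A) = -quadForm A := by
  ext x; simp [quadForm, neg_mulVec]

lemma quadForm_sub (A A' : Matrix ι ι ℂ) (x : ι → ℂ) :
    quadForm (A - A') x = quadForm A x - quadForm A' x := by
  simp [quadForm, sub_mulVec]

lemma quadForm_smul (t : ℝ) (A : Matrix ι ι ℂ) (x : ι → ℂ) :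
    quadForm (t • A) x = t * quadForm A x := by
  simp [quadForm, smul_mulVec]

lemma quadForm_map_ofReal_smul (A : Matrix ι ι ℂ) (t : ℝ) (x : ι → ℂ) :
    quadForm A ((t : ℂ) • x) = t ^ 2 * quadForm A x := by
  simp [quadForm, mulVec_smul, ← mul_assoc, sq]

lemma quadForm_mul_mul_conjTranspose [Fintype κ] (B : Matrix ι κ ℂ) (Y : Matrix κ κ ℂ) (x : ι → ℂ) :
    quadForm (B * Y * Bᴴ) x = quadForm Y (Bᴴ *ᵥ x) := by
  simp [quadForm, ← mulVec_mulVec, dotProduct_mulVec, star_mulVec]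

lemma continuous_quadForm (A : Matrix ι ι ℂ) : Continuous (quadForm A) := by
  unfold quadForm; fun_prop

lemma quadForm_diagonal [DecidableEq ι] (μ : ι → ℝ) (y : ι → ℂ) :
    quadForm (diagonal fun i => (μ i : ℂ)) y = diagForm μ y := by
  simp only [quadForm, diagForm, dotProduct, mulVec_diagonal, Complex.re_sum]
  refine Finset.sum_congr rfl fun i _ => ?_
  simp [normSq_apply]
  ring

/-- Finsler's lemma: `t` is read off a finite subcover of the unit sphere of `V` by the open sets
where `P + n Q` is positive. -/
theorem exists_forall_pos_add_mul_quadForm {P Q : Matrix ι ι ℂ} (hQ : ∀ x, 0 ≤ quadForm Q x)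
    (V : Submodule ℂ (ι → ℂ))
    (h : ∀ x ∈ V, x ≠ 0 → quadForm Q x = 0 → 0 < quadForm P x) :
    ∃ t : ℝ, ∀ x ∈ V, x ≠ 0 → 0 < quadForm P x + t * quadForm Q x := by
  let U (n : ℕ) : Set (ι → ℂ) := {x | 0 < quadForm P x + n * quadForm Q x}
  have hsphere : IsCompact ((V : Set (ι → ℂ)) ∩ Metric.sphere 0 1) :=
    (isCompact_sphere 0 1).inter_left V.closed_of_finiteDimensional
  obtain ⟨n, hn⟩ : ∃ n, (V : Set (ι → ℂ)) ∩ Metric.sphere 0 1 ⊆ U n := by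
    refine hsphere.elim_directed_cover U (fun n => isOpen_lt continuous_const
      ((continuous_quadForm P).add (continuous_const.mul (continuous_quadForm Q)))) ?_ ?_
    · rintro x ⟨hxV, hx1⟩
      have hx0 : x ≠ 0 := by rintro rfl; simp at hx1
      rcases (hQ x).eq_or_lt with hq | hq
      · exact Set.mem_iUnion.2 ⟨0, by simpa [U] using h x hxV hx0 hq.symm⟩
      · obtain ⟨n, hn⟩ := exists_nat_gt (-quadForm P x / quadForm Q x)
        refine Set.mem_iUnion.2 ⟨n, ?_⟩
        have := (div_lt_iff₀ hq).1 hn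
        simp only [U, Set.mem_ofPred_eq]
        linarith
    · refine Monotone.directed_le fun m n hmn x hx => ?_
      have : (m : ℝ) * quadForm Q x ≤ n * quadForm Q x :=
        mul_le_mul_of_nonneg_right (Nat.cast_le.2 hmn) (hQ x)
      simp only [U, Set.mem_ofPred_eq] at hx ⊢
      linarith
  refine ⟨n, fun x hxV hx0 => ?_⟩
  have hx : 0 < ‖x‖ := norm_pos_iff.2 hx0
  have hu := hn ⟨V.smul_mem ((‖x‖⁻¹ : ℝ) : ℂ) hxV, by simp [norm_smul, hx.ne']⟩
  simp only [U, Set.mem_ofPred_eq, quadForm_map_ofReal_smul] at hu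
  exact pos_of_mul_pos_right (a := (‖x‖⁻¹) ^ 2) (by linarith) (by positivity)

namespace Matrix.IsHermitian

variable [DecidableEq ι] {A : Matrix ι ι ℂ} (hA : A.IsHermitian)

noncomputable def eigCoord : (ι → ℂ) ≃ₗ[ℂ] (ι → ℂ) :=
  UnitaryGroup.toLinearEquiv (star hA.eigenvectorUnitary)

lemma eigCoord_apply (x : ι → ℂ) :
    hA.eigCoord x = (hA.eigenvectorUnitary : Matrix ι ι ℂ)ᴴ *ᵥ x := rfl

lemma eq_mul_diagonal_mul_conjTranspose :
    A = (hA.eigenvectorUnitary : Matrix ι ι ℂ) * diagonal (fun i => (hA.eigenvalues i : ℂ))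
      * (hA.eigenvectorUnitary : Matrix ι ι ℂ)ᴴ := by
  conv_lhs => rw [hA.spectral_theorem, Unitary.conjStarAlgAut_apply]
  rfl

lemma quadForm_eq_diagForm (x : ι → ℂ) :
    quadForm A x = diagForm hA.eigenvalues (hA.eigCoord x) := by
  conv_lhs => rw [hA.eq_mul_diagonal_mul_conjTranspose]
  rw [quadForm_mul_mul_conjTranspose, quadForm_diagonal, eigCoord_apply]

lemma mulVec_eq_zero_iff {x : ι → ℂ} :
    A *ᵥ x = 0 ↔ ∀ i, hA.eigenvalues i ≠ 0 → hA.eigCoord x i = 0 := by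
  have : hA.eigCoord (A *ᵥ x) = diagonal (fun i => (hA.eigenvalues i : ℂ)) *ᵥ hA.eigCoord x := by
    have hAx := congrArg (· *ᵥ x) hA.eq_mul_diagonal_mul_conjTranspose
    rw [eigCoord_apply, eigCoord_apply, hAx, mulVec_mulVec, ← Matrix.mul_assoc, ← Matrix.mul_assoc,
      ← star_eq_conjTranspose, Unitary.coe_star_mul_self, Matrix.one_mul, ← mulVec_mulVec]
  rw [← hA.eigCoord.map_eq_zero_iff, this, funext_iff]
  simp [mulVec_diagonal, or_iff_not_imp_left]

theorem isGreatest_posDims_iPos : IsGreatest (posDims (quadForm A)) (iPos hA) := by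
  have : quadForm A = diagForm hA.eigenvalues ∘ hA.eigCoord := funext hA.quadForm_eq_diagForm
  rw [this, posDims_comp_linearEquiv, iPos, Nat.card_eq_fintype_card]
  exact isGreatest_posDims_diagForm _

theorem isGreatest_posDims_iNeg : IsGreatest (posDims (-quadForm A)) (iNeg hA) := by
  have : -quadForm A = diagForm (-hA.eigenvalues) ∘ hA.eigCoord := by
    ext x; simp [hA.quadForm_eq_diagForm, diagForm]
  rw [this, posDims_comp_linearEquiv, iNeg, Nat.card_eq_fintype_card]
  simpa using isGreatest_posDims_diagForm (-hA.eigenvalues)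

theorem exists_nonpos_subspace : ∃ S : Submodule ℂ (ι → ℂ),
    Module.finrank ℂ S + iPos hA = Fintype.card ι ∧
      ∀ x ∈ S, quadForm A x ≤ 0 ∧ (quadForm A x = 0 → A *ᵥ x = 0) := by
  set N := LinearMap.ker (LinearMap.funLeft ℂ ℂ ((↑) : {i // 0 < hA.eigenvalues i} → ι))
  refine ⟨N.comap hA.eigCoord.toLinearMap, ?_, fun x hx => ?_⟩
  · rw [Submodule.comap_equiv_eq_map_symm, LinearEquiv.finrank_map_eq, iPos,
      Nat.card_eq_fintype_card]
    exact finrank_ker_funLeft_subtype_val _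
  · have hy := mem_ker_funLeft_subtype_val.1 hx
    rw [hA.quadForm_eq_diagForm, hA.mulVec_eq_zero_iff]
    exact ⟨diagForm_nonpos _ hy, eq_zero_of_diagForm_eq_zero _ hy⟩

theorem iPos_add_iNeg_eq_rank : iPos hA + iNeg hA = A.rank := by
  rw [hA.rank_eq_card_non_zero_eigs, iPos, iNeg, Nat.card_eq_fintype_card,
    Nat.card_eq_fintype_card, ← Fintype.card_subtype_or_disjoint]
  · exact Fintype.card_congr (Equiv.subtypeEquivRight fun i => by rw [ne_iff_lt_or_gt, or_comm])
  · exact fun r hp hn i hi => (hn i hi).not_gt (hp i hi)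

end Matrix.IsHermitian

lemma fromRows_one_mulVecLin_injective [DecidableEq ι] (W : Matrix κ ι ℂ) :
    Function.Injective (fromRows (1 : Matrix ι ι ℂ) W).mulVecLin := fun v w h => by
  simpa [fromRows_mulVec] using congrArg (· ∘ Sum.inl) h

variable [Fintype κ]

lemma quadForm_mul_conjTranspose (B : Matrix ι κ ℂ) (x : ι → ℂ) :
    quadForm (B * Bᴴ) x = (star (Bᴴ *ᵥ x) ⬝ᵥ Bᴴ *ᵥ x).re := by
  simp [quadForm, ← mulVec_mulVec, dotProduct_mulVec, star_mulVec]

lemma quadForm_mul_conjTranspose_nonneg (B : Matrix ι κ ℂ) (x : ι → ℂ) :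
    0 ≤ quadForm (B * Bᴴ) x := by
  rw [quadForm_mul_conjTranspose]
  exact (Complex.nonneg_iff.1 (dotProduct_star_self_nonneg _)).1

lemma quadForm_mul_conjTranspose_eq_zero {B : Matrix ι κ ℂ} {x : ι → ℂ} :
    quadForm (B * Bᴴ) x = 0 ↔ Bᴴ *ᵥ x = 0 := by
  rw [quadForm_mul_conjTranspose, ← dotProduct_star_self_eq_zero, Complex.ext_iff]
  simp [(Complex.nonneg_iff.1 (dotProduct_star_self_nonneg (Bᴴ *ᵥ x))).2.symm]

lemma quadForm_fromBlocks (A : Matrix ι ι ℂ) (B : Matrix ι κ ℂ) (v : ι → ℂ) (u : κ → ℂ) :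
    quadForm (fromBlocks A B Bᴴ 0) (Sum.elim v u)
      = quadForm A v + 2 * (star (Bᴴ *ᵥ v) ⬝ᵥ u).re := by
  have hstar : star (Sum.elim v u) = Sum.elim (star v) (star u) := by ext (i | j) <;> rfl
  have hcross : star v ⬝ᵥ B *ᵥ u = star (Bᴴ *ᵥ v) ⬝ᵥ u := by
    simp [dotProduct_mulVec, star_mulVec]
  have hcross' : star u ⬝ᵥ Bᴴ *ᵥ v = star (star (Bᴴ *ᵥ v) ⬝ᵥ u) := by
    rw [star_dotProduct]
  simp only [quadForm, fromBlocks_mulVec, hstar, sumElim_dotProduct_sumElim, zero_mulVec,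
    add_zero, Sum.elim_comp_inl, Sum.elim_comp_inr, dotProduct_add, hcross, hcross',
    Complex.add_re, Complex.star_def, Complex.conj_re]
  ring

lemma finrank_ker_fromRows_add_rank {C : Matrix ι ι ℂ} (hC : C.IsHermitian) (B : Matrix ι κ ℂ) :
    Module.finrank ℂ (LinearMap.ker (fromRows C Bᴴ).mulVecLin) + (fromCols C B).rank
      = Fintype.card ι := by
  have := LinearMap.finrank_range_add_finrank_ker (fromRows C Bᴴ).mulVecLin
  rw [Module.finrank_fintype_fun_eq_card] at this
  rw [← rank_conjTranspose, conjTranspose_fromCols_eq_fromRows_conjTranspose, hC.eq]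
  exact (add_comm _ _).trans this

lemma rank_fromCols_neg (A : Matrix ι ι ℂ) (B : Matrix ι κ ℂ) :
    (fromCols (-A) (-B)).rank = (fromCols A B).rank := by
  rw [← fromCols_neg, ← neg_one_smul ℂ (fromCols A B),
    rank_smul_of_mem_nonZeroDivisors _ (mem_nonZeroDivisors_of_ne_zero (by norm_num))]

variable [DecidableEq ι]

lemma quadForm_fromBlocks_fromRows (A : Matrix ι ι ℂ) (B : Matrix ι κ ℂ) (X : Matrix κ κ ℂ)
    (r : ℝ) (v : ι → ℂ) :
    quadForm (fromBlocks A B Bᴴ 0) (fromRows 1 (r • Bᴴ - (2⁻¹ : ℝ) • (X * Bᴴ)) *ᵥ v)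
      = quadForm (A - B * X * Bᴴ) v + 2 * r * quadForm (B * Bᴴ) v := by
  rw [fromRows_mulVec, one_mulVec, quadForm_fromBlocks, quadForm_sub,
    quadForm_mul_mul_conjTranspose, quadForm_mul_conjTranspose]
  simp [sub_mulVec, smul_mulVec, ← mulVec_mulVec, dotProduct_sub, quadForm]
  ring

lemma rank_sub_mul_mul_le (A : Matrix ι ι ℂ) (B : Matrix ι κ ℂ) (X : Matrix κ κ ℂ) :
    (A - B * X * Bᴴ).rank ≤ (fromCols A B).rank := by
  have : A - B * X * Bᴴ = fromCols A B * fromRows (1 : Matrix ι ι ℂ) (-(X * Bᴴ)) := by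
    rw [fromCols_mul_fromRows]
    simp [Matrix.mul_assoc, sub_eq_add_neg]
  rw [this]
  exact rank_mul_le_left _ _

def posInertias (A : Matrix ι ι ℂ) (B : Matrix ι κ ℂ) : Set ℕ :=
  {k | ∃ X : Matrix κ κ ℂ, X.IsHermitian ∧ ∃ h : (A - B * X * Bᴴ).IsHermitian, k = iPos h}

def negInertias (A : Matrix ι ι ℂ) (B : Matrix ι κ ℂ) : Set ℕ :=
  {k | ∃ X : Matrix κ κ ℂ, X.IsHermitian ∧ ∃ h : (A - B * X * Bᴴ).IsHermitian, k = iNeg h}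

lemma iNeg_eq_iPos_of_eq_neg {A A' : Matrix ι ι ℂ} (hA : A.IsHermitian) (hA' : A'.IsHermitian)
    (h : A' = -A) : iNeg hA = iPos hA' := by
  subst h
  exact hA.isGreatest_posDims_iNeg.unique (by simpa only [quadForm_neg] using
    hA'.isGreatest_posDims_iPos)

lemma negInertias_eq_posInertias_neg (A : Matrix ι ι ℂ) (B : Matrix ι κ ℂ) :
    negInertias A B = posInertias (-A) (-B) := by
  ext k
  constructor
  · rintro ⟨X, hX, hC, rfl⟩
    have hC' : (-A - (-B) * (-X) * (-B)ᴴ).IsHermitian := by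
      rw [neg_sub_neg_mul_mul, neg_neg]
      exact hC.neg
    exact ⟨-X, hX.neg, hC', iNeg_eq_iPos_of_eq_neg hC hC' (by rw [neg_sub_neg_mul_mul, neg_neg])⟩
  · rintro ⟨X, hX, hC', rfl⟩
    have hC : (A - B * (-X) * Bᴴ).IsHermitian := by
      have := hC'.neg
      rwa [neg_sub_neg_mul_mul, neg_neg] at this
    exact ⟨-X, hX.neg, hC, (iNeg_eq_iPos_of_eq_neg hC hC' (neg_sub_neg_mul_mul A B X)).symm⟩

variable [DecidableEq κ]

lemma rank_fromCols_sub_mul_mul (A : Matrix ι ι ℂ) (B : Matrix ι κ ℂ) (X : Matrix κ κ ℂ) :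
    (fromCols (A - B * X * Bᴴ) B).rank = (fromCols A B).rank := by
  have : fromCols (A - B * X * Bᴴ) B
      = fromCols A B * fromBlocks (1 : Matrix ι ι ℂ) 0 (-(X * Bᴴ)) (1 : Matrix κ κ ℂ) := by
    rw [fromCols_mul_fromBlocks]
    simp [Matrix.mul_assoc, sub_eq_add_neg]
  rw [this, rank_mul_eq_left_of_isUnit_det]
  simp

variable {A : Matrix ι ι ℂ} {B : Matrix ι κ ℂ}

lemma finrank_le_iPos_fromBlocks (hM : (fromBlocks A B Bᴴ 0).IsHermitian) (X : Matrix κ κ ℂ)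
    {T : Submodule ℂ (ι → ℂ)}
    (hT : ∀ v ∈ T, v ≠ 0 → Bᴴ *ᵥ v = 0 → 0 < quadForm (A - B * X * Bᴴ) v) :
    Module.finrank ℂ T ≤ iPos hM := by
  obtain ⟨t, ht⟩ := exists_forall_pos_add_mul_quadForm (quadForm_mul_conjTranspose_nonneg B) T
    fun v hv hv0 hq => hT v hv hv0 (quadForm_mul_conjTranspose_eq_zero.1 hq)
  refine hM.isGreatest_posDims_iPos.2 (posDims_comp_subset _
    (fromRows_one_mulVecLin_injective ((t / 2) • Bᴴ - (2⁻¹ : ℝ) • (X * Bᴴ)))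
    ⟨T, rfl, fun v hv hv0 => ?_⟩)
  simp only [Function.comp_apply, mulVecLin_apply, quadForm_fromBlocks_fromRows]
  linarith [ht v hv hv0]

lemma finrank_le_iNeg_fromBlocks (hM : (fromBlocks A B Bᴴ 0).IsHermitian) (X : Matrix κ κ ℂ)
    {T : Submodule ℂ (ι → ℂ)}
    (hT : ∀ v ∈ T, v ≠ 0 → Bᴴ *ᵥ v = 0 → quadForm (A - B * X * Bᴴ) v < 0) :
    Module.finrank ℂ T ≤ iNeg hM := by
  obtain ⟨t, ht⟩ := exists_forall_pos_add_mul_quadForm (P := -(A - B * X * Bᴴ))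
    (quadForm_mul_conjTranspose_nonneg B) T fun v hv hv0 hq => by
      rw [quadForm_neg, Pi.neg_apply, neg_pos]
      exact hT v hv hv0 (quadForm_mul_conjTranspose_eq_zero.1 hq)
  refine hM.isGreatest_posDims_iNeg.2 (posDims_comp_subset _
    (fromRows_one_mulVecLin_injective ((-t / 2) • Bᴴ - (2⁻¹ : ℝ) • (X * Bᴴ)))
    ⟨T, rfl, fun v hv hv0 => ?_⟩)
  simp only [Function.comp_apply, Pi.neg_apply, mulVecLin_apply, quadForm_fromBlocks_fromRows]
  have := ht v hv hv0
  rw [quadForm_neg, Pi.neg_apply] at this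
  linarith

lemma iPos_le_iPos_fromBlocks (hM : (fromBlocks A B Bᴴ 0).IsHermitian) {X : Matrix κ κ ℂ}
    (hC : (A - B * X * Bᴴ).IsHermitian) : iPos hC ≤ iPos hM := by
  obtain ⟨T, hT, hTpos⟩ := hC.isGreatest_posDims_iPos.1
  exact hT ▸ finrank_le_iPos_fromBlocks hM X fun v hv hv0 _ => hTpos v hv hv0

lemma exists_finrank_eq_iPos_fromBlocks (hM : (fromBlocks A B Bᴴ 0).IsHermitian) :
    ∃ W : Submodule ℂ (ι → ℂ), Module.finrank ℂ W = iPos hM ∧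
      ∀ w ∈ W, w ≠ 0 → Bᴴ *ᵥ w = 0 → 0 < quadForm A w := by
  obtain ⟨V, hV, hVpos⟩ := hM.isGreatest_posDims_iPos.1
  have hquad (x : ι ⊕ κ → ℂ) : quadForm (fromBlocks A B Bᴴ 0) x
      = quadForm A (x ∘ Sum.inl) + 2 * (star (Bᴴ *ᵥ (x ∘ Sum.inl)) ⬝ᵥ (x ∘ Sum.inr)).re := by
    rw [← quadForm_fromBlocks, Sum.elim_comp_inl_inr]
  let π := (LinearMap.funLeft ℂ ℂ (Sum.inl : ι → ι ⊕ κ)).comp V.subtype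
  have hπ : Function.Injective π := by
    rw [← LinearMap.ker_eq_bot, Submodule.eq_bot_iff]
    intro x hx
    by_contra hx0
    have := hVpos x x.2 (by simpa using hx0)
    rw [hquad, show (x : ι ⊕ κ → ℂ) ∘ Sum.inl = 0 from hx] at this
    simp [quadForm] at this
  refine ⟨LinearMap.range π, (LinearMap.finrank_range_of_inj hπ).trans hV, ?_⟩
  rintro _ ⟨x, rfl⟩ hx0 hBx
  have := hVpos x x.2 fun h => hx0 (by simp [π, h])
  rwa [hquad, show (x : ι ⊕ κ → ℂ) ∘ Sum.inl = π x from rfl, hBx, star_zero, zero_dotProduct,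
    Complex.zero_re, mul_zero, add_zero] at this

lemma exists_iPos_eq_iPos_fromBlocks (hM : (fromBlocks A B Bᴴ 0).IsHermitian) :
    ∃ X : Matrix κ κ ℂ, X.IsHermitian ∧
      ∃ hC : (A - B * X * Bᴴ).IsHermitian, iPos hM = iPos hC := by
  obtain ⟨W, hW, hWpos⟩ := exists_finrank_eq_iPos_fromBlocks hM
  obtain ⟨t, ht⟩ := exists_forall_pos_add_mul_quadForm (P := A)
    (quadForm_mul_conjTranspose_nonneg B) W
    fun w hw hw0 hq => hWpos w hw hw0 (quadForm_mul_conjTranspose_eq_zero.1 hq)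
  have hX : ((-t) • (1 : Matrix κ κ ℂ)).IsHermitian := isHermitian_one.smul (IsSelfAdjoint.all _)
  have hC := (isHermitian_fromBlocks_iff.1 hM).1.sub (isHermitian_mul_mul_conjTranspose B hX)
  refine ⟨_, hX, hC, le_antisymm ?_ (iPos_le_iPos_fromBlocks hM hC)⟩
  refine hW ▸ hC.isGreatest_posDims_iPos.2 ⟨W, rfl, fun w hw hw0 => ?_⟩
  have : quadForm (B * ((-t) • (1 : Matrix κ κ ℂ)) * Bᴴ) w = -t * quadForm (B * Bᴴ) w := by
    rw [Matrix.mul_smul, Matrix.smul_mul, Matrix.mul_one, quadForm_smul]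
  rw [quadForm_sub, this]
  linarith [ht w hw hw0]

lemma rank_le_iPos_add_iNeg_fromBlocks (hM : (fromBlocks A B Bᴴ 0).IsHermitian)
    {X : Matrix κ κ ℂ} (hC : (A - B * X * Bᴴ).IsHermitian) :
    (fromCols A B).rank ≤ iPos hC + iNeg hM := by
  obtain ⟨S, hS, hSnonpos⟩ := hC.exists_nonpos_subspace
  have hK := finrank_ker_fromRows_add_rank hC B
  rw [rank_fromCols_sub_mul_mul] at hK
  set K := LinearMap.ker (fromRows (A - B * X * Bᴴ) Bᴴ).mulVecLin
  obtain ⟨T, hTS, hTK, hT⟩ := exists_le_inf_eq_bot_finrank_le S K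
  have hTneg := finrank_le_iNeg_fromBlocks hM X (T := T) fun v hv hv0 hBv => by
    obtain ⟨hle, hzero⟩ := hSnonpos v (hTS hv)
    refine hle.lt_of_ne fun h => hv0 ?_
    have hvK : v ∈ K := by simp [K, fromRows_mulVec, hzero h, hBv]
    have : v ∈ T ⊓ K := ⟨hv, hvK⟩
    rwa [hTK, Submodule.mem_bot] at this
  omega

theorem isGreatest_posInertias (hM : (fromBlocks A B Bᴴ 0).IsHermitian) :
    IsGreatest (posInertias A B) (iPos hM) :=
  ⟨exists_iPos_eq_iPos_fromBlocks hM, by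
    rintro _ ⟨X, -, hC, rfl⟩
    exact iPos_le_iPos_fromBlocks hM hC⟩

theorem isGreatest_negInertias (hM : (fromBlocks A B Bᴴ 0).IsHermitian) :
    IsGreatest (negInertias A B) (iNeg hM) := by
  rw [negInertias_eq_posInertias_neg,
    iNeg_eq_iPos_of_eq_neg hM (isHermitian_fromBlocks_neg hM) (fromBlocks_neg_neg A B)]
  exact isGreatest_posInertias _

theorem isLeast_posInertias (hM : (fromBlocks A B Bᴴ 0).IsHermitian) :
    IsLeast (posInertias A B) ((fromCols A B).rank - iNeg hM) := by
  refine ⟨?_, ?_⟩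
  · obtain ⟨X, hX, hC, hneg⟩ := (isGreatest_negInertias hM).1
    refine ⟨X, hX, hC, ?_⟩
    have := hC.iPos_add_iNeg_eq_rank
    have := rank_sub_mul_mul_le A B X
    have := rank_le_iPos_add_iNeg_fromBlocks hM hC
    omega
  · rintro _ ⟨X, -, hC, rfl⟩
    have := rank_le_iPos_add_iNeg_fromBlocks hM hC
    omega

theorem isLeast_negInertias (hM : (fromBlocks A B Bᴴ 0).IsHermitian) :
    IsLeast (negInertias A B) ((fromCols A B).rank - iPos hM) := by
  rw [negInertias_eq_posInertias_neg, ← rank_fromCols_neg,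
    ← iNeg_eq_iPos_of_eq_neg (isHermitian_fromBlocks_neg hM) hM
      (by rw [fromBlocks_neg_neg, neg_neg])]
  exact isLeast_posInertias _

theorem stmt11_general (m n : ℕ) (A : Matrix (Fin m) (Fin m) ℂ)
    (B : Matrix (Fin m) (Fin n) ℂ)
    (hM : (fromBlocks A B Bᴴ (0 : Matrix (Fin n) (Fin n) ℂ)).IsHermitian) :
    IsGreatest {k | ∃ X : Matrix (Fin n) (Fin n) ℂ, X.IsHermitian ∧
        ∃ h : (A - B * X * Bᴴ).IsHermitian, k = iPos h} (iPos hM) ∧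
    IsLeast {k | ∃ X : Matrix (Fin n) (Fin n) ℂ, X.IsHermitian ∧
        ∃ h : (A - B * X * Bᴴ).IsHermitian, k = iPos h}
      ((fromCols A B).rank - iNeg hM) ∧
    IsGreatest {k | ∃ X : Matrix (Fin n) (Fin n) ℂ, X.IsHermitian ∧
        ∃ h : (A - B * X * Bᴴ).IsHermitian, k = iNeg h} (iNeg hM) ∧
    IsLeast {k | ∃ X : Matrix (Fin n) (Fin n) ℂ, X.IsHermitian ∧
        ∃ h : (A - B * X * Bᴴ).IsHermitian, k = iNeg h}
      ((fromCols A B).rank - iPos hM) :=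
  ⟨isGreatest_posInertias hM, isLeast_posInertias hM, isGreatest_negInertias hM,
    isLeast_negInertias hM⟩

theorem stmt11 (m n : ℕ) (A : Matrix (Fin m) (Fin m) ℂ) (hA : A.IsHermitian)
    (B : Matrix (Fin m) (Fin n) ℂ)
    (hM : (fromBlocks A B Bᴴ (0 : Matrix (Fin n) (Fin n) ℂ)).IsHermitian) :
    IsGreatest {k | ∃ X : Matrix (Fin n) (Fin n) ℂ, X.IsHermitian ∧
        ∃ h : (A - B * X * Bᴴ).IsHermitian, k = iPos h} (iPos hM) ∧
    IsLeast {k | ∃ X : Matrix (Fin n) (Fin n) ℂ, X.IsHermitian ∧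
        ∃ h : (A - B * X * Bᴴ).IsHermitian, k = iPos h}
      ((fromCols A B).rank - iNeg hM) ∧
    IsGreatest {k | ∃ X : Matrix (Fin n) (Fin n) ℂ, X.IsHermitian ∧
        ∃ h : (A - B * X * Bᴴ).IsHermitian, k = iNeg h} (iNeg hM) ∧
    IsLeast {k | ∃ X : Matrix (Fin n) (Fin n) ℂ, X.IsHermitian ∧
        ∃ h : (A - B * X * Bᴴ).IsHermitian, k = iNeg h}
      ((fromCols A B).rank - iPos hM) :=
  stmt11_general m n A B hM
end

section
/- Let B_i ∈ ℂ^{m_i×n} and A_i ∈ ℂ^{m_i×m_i} Hermitian with range(A_i) ⊆ range(B_i) for i = 2, 3 (so each equation B_i·X·B_i* = A_i has a Hermitian solution). Then the pair of equations B_2·X·B_2* = A_2 and B_3·X·B_3* = A_3 have a common Hermitian solution if and only if the rank of the block matrix [[A_2, 0, B_2],[0, -A_3, B_3],[B_2*, B_3*, 0]] equals 2·r([B_2; B_3]) (twice the rank of the column block matrix stacking B_2 over B_3). -/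
open Matrix ComplexOrder

/-!
Write `B = [B₂; B₃]` and `A = diag(A₂, -A₃)`. Counting the kernel of `M = [[A, B], [Bᴴ, 0]]`
gives `r(M) = 2 r(B) + dim ker Bᴴ - dim {x ∈ ker Bᴴ | A x ∈ range B}`, so the rank condition says
that `A` maps `ker Bᴴ` into `range B = (ker Bᴴ)ᗮ`, i.e. that the form `(u, v) ↦ uᴴ A v`
vanishes on `ker Bᴴ`. Splitting `u = (x, z)`, this says that `xᴴ A₂ x' = zᴴ A₃ z'` whenever
`B₂ᴴ x = -B₃ᴴ z` and `B₂ᴴ x' = -B₃ᴴ z'`: the Hermitian forms that `A₂` and `A₃` induce on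
`range B₂ᴴ` and `range B₃ᴴ` agree on the intersection. This is clearly necessary for a common
solution, and it is sufficient: if `Y₂`, `Y₃` solve the two equations separately and `Q` is a
projection onto `range B₂ᴴ` mapping `range B₃ᴴ` into the intersection, then
`X = Qᴴ (Y₂ - Y₃) Q + Y₃` solves both.
-/

open Module

theorem Submodule.exists_linearMap_fixing_and_mapsTo_inf {K V : Type*} [DivisionRing K]
    [AddCommGroup V] [Module K V] (S T : Submodule K V) :
    ∃ P : V →ₗ[K] V, (∀ v ∈ S, P v = v) ∧ ∀ v ∈ T, P v ∈ S ⊓ T := by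
  obtain ⟨L, hdisj, hsup⟩ := IsModularLattice.exists_disjoint_and_sup_eq (inf_le_right : S ⊓ T ≤ T)
  have hLS : Disjoint L S := by
    rw [Submodule.disjoint_def]
    intro x hxL hxS
    have hxT : x ∈ T := hsup ▸ Submodule.mem_sup_right hxL
    exact (Submodule.disjoint_def.mp hdisj) x ⟨hxS, hxT⟩ hxL
  obtain ⟨C, hLC, hCS⟩ := hLS.exists_isCompl
  refine ⟨S.projection C hCS.symm, fun v hv ↦ projection_apply_of_mem_left _ hv, fun v hv ↦ ?_⟩
  rw [← hsup] at hv
  obtain ⟨a, ha, l, hl, rfl⟩ := Submodule.mem_sup.mp hv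
  rw [map_add, projection_apply_of_mem_left _ ha.1, projection_apply_of_mem_right _ (hLC hl),
    add_zero]
  exact ha

namespace Matrix

section Field

variable {K : Type*} [Field K] {l m n p q : Type*} [Fintype m] [Fintype n]

theorem mem_ker_fromBlocks_zero₂₂ (A : Matrix p m K) (B : Matrix p n K) (C : Matrix q m K)
    (u : m ⊕ n → K) :
    u ∈ LinearMap.ker (fromBlocks A B C 0).mulVecLin ↔
      A *ᵥ (u ∘ Sum.inl) + B *ᵥ (u ∘ Sum.inr) = 0 ∧ C *ᵥ (u ∘ Sum.inl) = 0 := by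
  rw [LinearMap.mem_ker, mulVecLin_apply, fromBlocks_mulVec, zero_mulVec, add_zero,
    ← Sum.elim_zero_zero, Sum.elim_eq_iff]

theorem finrank_ker_fromBlocks_zero₂₂ (A : Matrix p m K) (B : Matrix p n K)
    (C : Matrix q m K) :
    finrank K (LinearMap.ker (fromBlocks A B C 0).mulVecLin) =
      finrank K ↥(LinearMap.ker C.mulVecLin ⊓ (LinearMap.range B.mulVecLin).comap A.mulVecLin) +
        finrank K (LinearMap.ker B.mulVecLin) := by
  let π := LinearMap.funLeft K K Sum.inl ∘ₗ (LinearMap.ker (fromBlocks A B C 0).mulVecLin).subtype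
  have hπ : LinearMap.range π = LinearMap.ker C.mulVecLin ⊓
      (LinearMap.range B.mulVecLin).comap A.mulVecLin := by
    ext x
    simp only [π, LinearMap.mem_range, LinearMap.coe_comp, Function.comp_apply,
      Submodule.coe_subtype, Subtype.exists, mem_ker_fromBlocks_zero₂₂]
    simp only [Submodule.mem_inf, Submodule.mem_comap, LinearMap.mem_ker, LinearMap.mem_range,
      mulVecLin_apply]
    constructor
    · rintro ⟨u, ⟨hAB, hC⟩, rfl⟩
      exact ⟨hC, -(u ∘ Sum.inr), by rw [mulVec_neg, neg_eq_iff_add_eq_zero, add_comm]; exact hAB⟩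
    · rintro ⟨hC, y, hy⟩
      exact ⟨Sum.elim x (-y), ⟨by simp [mulVec_neg, hy], hC⟩, rfl⟩
  -- the kernel of `π` is `ker B`, embedded as the second component
  let ρ := LinearMap.funLeft K K Sum.inr ∘ₗ
    (LinearMap.ker (fromBlocks A B C 0).mulVecLin).subtype ∘ₗ (LinearMap.ker π).subtype
  have hρ_inj : Function.Injective ρ := by
    rintro ⟨⟨u, _⟩, hu⟩ ⟨⟨v, _⟩, hv⟩ huv
    obtain rfl : u = v := by
      rw [← Sum.elim_comp_inl_inr u, ← Sum.elim_comp_inl_inr v]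
      exact congrArg₂ Sum.elim (hu.trans hv.symm) huv
    rfl
  have hρ : LinearMap.range ρ = LinearMap.ker B.mulVecLin := by
    ext y
    rw [LinearMap.mem_ker, mulVecLin_apply]
    constructor
    · rintro ⟨⟨⟨u, hu⟩, hπu⟩, rfl⟩
      have hπu : u ∘ Sum.inl = 0 := hπu
      rw [mem_ker_fromBlocks_zero₂₂, hπu, mulVec_zero, zero_add] at hu
      exact hu.1
    · intro hy
      have hu : Sum.elim (0 : m → K) y ∈ LinearMap.ker (fromBlocks A B C 0).mulVecLin := by
        rw [mem_ker_fromBlocks_zero₂₂]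
        simp [hy]
      exact ⟨⟨⟨Sum.elim 0 y, hu⟩, rfl⟩, rfl⟩
  rw [← hπ, ← hρ, LinearMap.finrank_range_of_inj hρ_inj, LinearMap.finrank_range_add_finrank_ker]

theorem rank_fromBlocks_zero₂₂_add_finrank (A : Matrix p m K) (B : Matrix p n K)
    (C : Matrix q m K) :
    (fromBlocks A B C 0).rank +
        finrank K ↥(LinearMap.ker C.mulVecLin ⊓
          (LinearMap.range B.mulVecLin).comap A.mulVecLin) =
      Fintype.card m + B.rank := by
  have hM := LinearMap.finrank_range_add_finrank_ker (fromBlocks A B C 0).mulVecLin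
  have hB := LinearMap.finrank_range_add_finrank_ker B.mulVecLin
  rw [finrank_ker_fromBlocks_zero₂₂] at hM
  simp only [finrank_fintype_fun_eq_card, Fintype.card_sum] at hM hB
  rw [Matrix.rank, Matrix.rank]
  omega

theorem exists_mul_mul_eq_self (B : Matrix m n K) : ∃ G : Matrix n m K, B * G * B = B := by
  classical
  obtain ⟨g, hg⟩ := B.mulVecLin.rangeRestrict.exists_rightInverse_of_surjective
    (LinearMap.range_rangeRestrict _)
  obtain ⟨p, hp⟩ := (LinearMap.range B.mulVecLin).subtype.exists_leftInverse_of_injective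
    (Submodule.ker_subtype _)
  refine ⟨LinearMap.toMatrix' (g ∘ₗ p), Matrix.toLin'.injective (LinearMap.ext fun v ↦ ?_)⟩
  have hpB : p (B *ᵥ v) = B.mulVecLin.rangeRestrict v :=
    LinearMap.congr_fun hp (B.mulVecLin.rangeRestrict v)
  have hBg : ∀ w, B *ᵥ g w = w := fun w ↦ congrArg Subtype.val (LinearMap.congr_fun hg w)
  simp only [toLin'_mul, LinearMap.comp_apply, toLin'_toMatrix', toLin'_apply, hpB, hBg]
  rfl

theorem mul_mul_eq_of_range_le [Fintype l] {B : Matrix m n K} {G : Matrix n m K}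
    (hG : B * G * B = B) {A : Matrix m l K}
    (h : LinearMap.range A.mulVecLin ≤ LinearMap.range B.mulVecLin) : B * G * A = A := by
  classical
  refine Matrix.toLin'.injective (LinearMap.ext fun v ↦ ?_)
  obtain ⟨y, hy⟩ := h (LinearMap.mem_range_self _ v)
  rw [mulVecLin_apply, mulVecLin_apply] at hy
  rw [toLin'_apply, toLin'_apply, ← mulVec_mulVec, ← hy, mulVec_mulVec, hG]

theorem exists_isHermitian_mul_mul_conjTranspose_eq [StarRing K]
    {A : Matrix m m K} (hA : A.IsHermitian) {B : Matrix m n K}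
    (h : LinearMap.range A.mulVecLin ≤ LinearMap.range B.mulVecLin) :
    ∃ Y : Matrix n n K, Y.IsHermitian ∧ B * Y * Bᴴ = A := by
  obtain ⟨G, hG⟩ := B.exists_mul_mul_eq_self
  have hGA : B * G * A = A := mul_mul_eq_of_range_le hG h
  refine ⟨G * A * Gᴴ, isHermitian_mul_mul_conjTranspose G hA, ?_⟩
  calc B * (G * A * Gᴴ) * Bᴴ = B * G * A * (B * G)ᴴ := by
        simp only [conjTranspose_mul, Matrix.mul_assoc]
    _ = A * (B * G)ᴴ := by rw [hGA]
    _ = (B * G * A)ᴴ := by rw [conjTranspose_mul (B * G) A, hA.eq]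
    _ = A := by rw [hGA, hA.eq]

end Field

section StarRing

variable {R : Type*} [CommRing R] [StarRing R] {l m n : Type*} [Fintype l] [Fintype m]

theorem forall_ker_fromRows_conjTranspose_iff (A₂ : Matrix l l R) (A₃ : Matrix m m R)
    (B₂ : Matrix l n R) (B₃ : Matrix m n R) :
    (∀ u v, (fromRows B₂ B₃)ᴴ *ᵥ u = 0 → (fromRows B₂ B₃)ᴴ *ᵥ v = 0 →
        star u ⬝ᵥ fromBlocks A₂ 0 0 (-A₃) *ᵥ v = 0) ↔
      ∀ x z x' z', B₂ᴴ *ᵥ x + B₃ᴴ *ᵥ z = 0 → B₂ᴴ *ᵥ x' + B₃ᴴ *ᵥ z' = 0 →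
        star x ⬝ᵥ A₂ *ᵥ x' = star z ⬝ᵥ A₃ *ᵥ z' := by
  have hker (x : l → R) (z : m → R) :
      (fromRows B₂ B₃)ᴴ *ᵥ Sum.elim x z = B₂ᴴ *ᵥ x + B₃ᴴ *ᵥ z := by
    rw [conjTranspose_fromRows_eq_fromCols_conjTranspose, fromCols_mulVec_sumElim]
  have hform (x x' : l → R) (z z' : m → R) :
      star (Sum.elim x z) ⬝ᵥ fromBlocks A₂ 0 0 (-A₃) *ᵥ Sum.elim x' z' =
        star x ⬝ᵥ A₂ *ᵥ x' - star z ⬝ᵥ A₃ *ᵥ z' := by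
    simp [Function.star_sumElim, fromBlocks_mulVec, sumElim_dotProduct_sumElim, neg_mulVec,
      sub_eq_add_neg]
  constructor
  · intro h x z x' z' hxz hxz'
    have := h (Sum.elim x z) (Sum.elim x' z') (by rwa [hker]) (by rwa [hker])
    rwa [hform, sub_eq_zero] at this
  · intro h u v hu hv
    rw [← Sum.elim_comp_inl_inr u, hker] at hu
    rw [← Sum.elim_comp_inl_inr v, hker] at hv
    rw [← Sum.elim_comp_inl_inr u, ← Sum.elim_comp_inl_inr v, hform, sub_eq_zero]
    exact h _ _ _ _ hu hv

variable [Fintype n]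

theorem star_dotProduct_mulVec_eq_zero_of_conjTranspose_mulVec_eq_zero {B : Matrix m n R}
    {u : m → R} (hu : Bᴴ *ᵥ u = 0) (y : n → R) : star u ⬝ᵥ B *ᵥ y = 0 := by
  rw [dotProduct_mulVec, ← conjTranspose_conjTranspose B, ← star_mulVec, hu, star_zero,
    zero_dotProduct]

theorem star_dotProduct_mul_mul_conjTranspose_mulVec (M : Matrix m n R) (Z : Matrix n n R)
    (v w : m → R) :
    star v ⬝ᵥ (M * Z * Mᴴ) *ᵥ w = star (Mᴴ *ᵥ v) ⬝ᵥ Z *ᵥ (Mᴴ *ᵥ w) := by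
  rw [← mulVec_mulVec, ← mulVec_mulVec, dotProduct_mulVec, star_mulVec,
    conjTranspose_conjTranspose]

end StarRing

section StarOrderedField

variable {R : Type*} [Field R] [PartialOrder R] [StarRing R] [StarOrderedRing R]
  {l m n : Type*} [Fintype l] [Fintype m] [Fintype n]

theorem isCompl_range_ker_conjTranspose (B : Matrix m n R) :
    IsCompl (LinearMap.range B.mulVecLin) (LinearMap.ker Bᴴ.mulVecLin) := by
  refine (Submodule.isCompl_iff_disjoint _ _ ?_).mpr ?_
  · have := LinearMap.finrank_range_add_finrank_ker Bᴴ.mulVecLin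
    have hr : finrank R (LinearMap.range Bᴴ.mulVecLin) =
        finrank R (LinearMap.range B.mulVecLin) :=
      B.rank_conjTranspose
    omega
  · rw [Submodule.disjoint_def]
    rintro _ ⟨y, rfl⟩ hy
    rw [LinearMap.mem_ker, mulVecLin_apply, mulVecLin_apply, mulVec_mulVec] at hy
    exact (conjTranspose_mul_self_mulVec_eq_zero B y).mp hy

theorem map_ker_conjTranspose_le_range_iff (A : Matrix m m R) (B : Matrix m n R) :
    (LinearMap.ker Bᴴ.mulVecLin).map A.mulVecLin ≤ LinearMap.range B.mulVecLin ↔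
      ∀ u v, Bᴴ *ᵥ u = 0 → Bᴴ *ᵥ v = 0 → star u ⬝ᵥ A *ᵥ v = 0 := by
  constructor
  · intro h u v hu hv
    obtain ⟨y, hy⟩ := h ⟨v, hv, rfl⟩
    rw [mulVecLin_apply, mulVecLin_apply] at hy
    rw [← hy, star_dotProduct_mulVec_eq_zero_of_conjTranspose_mulVec_eq_zero hu]
  · rintro h _ ⟨v, hv, rfl⟩
    have hsup : A.mulVecLin v ∈ LinearMap.range B.mulVecLin ⊔ LinearMap.ker Bᴴ.mulVecLin := by
      rw [(isCompl_range_ker_conjTranspose B).sup_eq_top]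
      trivial
    obtain ⟨_, ⟨y, rfl⟩, k, hk, hAv⟩ := Submodule.mem_sup.mp hsup
    rw [LinearMap.mem_ker, mulVecLin_apply] at hk
    rw [SetLike.mem_coe, LinearMap.mem_ker, mulVecLin_apply] at hv
    rw [mulVecLin_apply, mulVecLin_apply] at hAv
    -- `k` is orthogonal both to `A v` and to `range B`, hence to itself
    have hk0 : k = 0 := by
      have := h k v hk hv
      rwa [← hAv, dotProduct_add,
        star_dotProduct_mulVec_eq_zero_of_conjTranspose_mulVec_eq_zero hk, zero_add,
        dotProduct_star_self_eq_zero] at this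
    rw [mulVecLin_apply, ← hAv, hk0, add_zero]
    exact LinearMap.mem_range_self _ y

theorem rank_fromBlocks_conjTranspose_eq_two_mul_rank_iff (A : Matrix m m R)
    (B : Matrix m n R) :
    (fromBlocks A B Bᴴ 0).rank = 2 * B.rank ↔
      (LinearMap.ker Bᴴ.mulVecLin).map A.mulVecLin ≤ LinearMap.range B.mulVecLin := by
  have hM := rank_fromBlocks_zero₂₂_add_finrank A B Bᴴ
  have hBH := LinearMap.finrank_range_add_finrank_ker Bᴴ.mulVecLin
  have hr : finrank R (LinearMap.range Bᴴ.mulVecLin) = B.rank := B.rank_conjTranspose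
  rw [finrank_fintype_fun_eq_card] at hBH
  rw [Submodule.map_le_iff_le_comap, ← inf_eq_left]
  constructor
  · intro h
    exact Submodule.eq_of_le_of_finrank_eq inf_le_left (by omega)
  · intro h
    rw [h] at hM
    omega

theorem mul_mul_conjTranspose_eq_zero {M : Matrix m n R} {Z : Matrix n n R}
    (h : ∀ v w, star (Mᴴ *ᵥ v) ⬝ᵥ Z *ᵥ (Mᴴ *ᵥ w) = 0) : M * Z * Mᴴ = 0 := by
  classical
  refine ext_of_mulVec_single fun j ↦ ?_
  rw [zero_mulVec, ← dotProduct_star_self_eq_zero, star_dotProduct_mul_mul_conjTranspose_mulVec]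
  exact h _ _

theorem exists_isHermitian_mul_mul_conjTranspose_eq_of_forms_agree {Y₂ Y₃ : Matrix n n R}
    (hY₂ : Y₂.IsHermitian) (hY₃ : Y₃.IsHermitian) (B₂ : Matrix l n R) (B₃ : Matrix m n R)
    (hY : ∀ u ∈ LinearMap.range B₂ᴴ.mulVecLin ⊓ LinearMap.range B₃ᴴ.mulVecLin,
      ∀ u' ∈ LinearMap.range B₂ᴴ.mulVecLin ⊓ LinearMap.range B₃ᴴ.mulVecLin,
        star u ⬝ᵥ Y₂ *ᵥ u' = star u ⬝ᵥ Y₃ *ᵥ u') :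
    ∃ X : Matrix n n R, X.IsHermitian ∧
      B₂ * X * B₂ᴴ = B₂ * Y₂ * B₂ᴴ ∧ B₃ * X * B₃ᴴ = B₃ * Y₃ * B₃ᴴ := by
  classical
  obtain ⟨P, hP₂, hP₃⟩ := Submodule.exists_linearMap_fixing_and_mapsTo_inf
    (LinearMap.range B₂ᴴ.mulVecLin) (LinearMap.range B₃ᴴ.mulVecLin)
  set Q := LinearMap.toMatrix' P
  have hQ : ∀ v, Q *ᵥ v = P v := fun v ↦ by
    rw [← toLin'_apply, toLin'_toMatrix']
  have hB₂Q : B₂ * Qᴴ = B₂ := by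
    have hQB₂ : Q * B₂ᴴ = B₂ᴴ := ext_of_mulVec_single fun j ↦ by
      rw [← mulVec_mulVec, hQ]
      exact hP₂ _ ⟨_, rfl⟩
    simpa only [conjTranspose_mul, conjTranspose_conjTranspose] using congrArg conjTranspose hQB₂
  have hB₃Q : B₃ * Qᴴ * (Y₂ - Y₃) * (B₃ * Qᴴ)ᴴ = 0 := by
    refine mul_mul_conjTranspose_eq_zero fun v w ↦ ?_
    rw [sub_mulVec, dotProduct_sub, sub_eq_zero]
    refine hY _ ?_ _ ?_ <;>
    · rw [conjTranspose_mul, conjTranspose_conjTranspose, ← mulVec_mulVec, hQ]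
      exact hP₃ _ (LinearMap.mem_range_self _ _)
  refine ⟨Qᴴ * (Y₂ - Y₃) * Q + Y₃, (isHermitian_conjTranspose_mul_mul Q (hY₂.sub hY₃)).add hY₃,
    ?_, ?_⟩
  · calc B₂ * (Qᴴ * (Y₂ - Y₃) * Q + Y₃) * B₂ᴴ
        = B₂ * Qᴴ * (Y₂ - Y₃) * (B₂ * Qᴴ)ᴴ + B₂ * Y₃ * B₂ᴴ := by
          simp only [conjTranspose_mul, conjTranspose_conjTranspose, Matrix.mul_add,
            Matrix.add_mul, Matrix.mul_assoc]
      _ = B₂ * Y₂ * B₂ᴴ := by rw [hB₂Q, Matrix.mul_sub, Matrix.sub_mul, sub_add_cancel]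
  · calc B₃ * (Qᴴ * (Y₂ - Y₃) * Q + Y₃) * B₃ᴴ
        = B₃ * Qᴴ * (Y₂ - Y₃) * (B₃ * Qᴴ)ᴴ + B₃ * Y₃ * B₃ᴴ := by
          simp only [conjTranspose_mul, conjTranspose_conjTranspose, Matrix.mul_add,
            Matrix.add_mul, Matrix.mul_assoc]
      _ = B₃ * Y₃ * B₃ᴴ := by rw [hB₃Q, zero_add]

theorem exists_isHermitian_common_solution_iff
    {A₂ : Matrix l l R} {A₃ : Matrix m m R} (hA₂ : A₂.IsHermitian) (hA₃ : A₃.IsHermitian)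
    {B₂ : Matrix l n R} {B₃ : Matrix m n R}
    (h₂ : LinearMap.range A₂.mulVecLin ≤ LinearMap.range B₂.mulVecLin)
    (h₃ : LinearMap.range A₃.mulVecLin ≤ LinearMap.range B₃.mulVecLin) :
    (∃ X : Matrix n n R, X.IsHermitian ∧ B₂ * X * B₂ᴴ = A₂ ∧ B₃ * X * B₃ᴴ = A₃) ↔
      ∀ x z x' z', B₂ᴴ *ᵥ x + B₃ᴴ *ᵥ z = 0 → B₂ᴴ *ᵥ x' + B₃ᴴ *ᵥ z' = 0 →
        star x ⬝ᵥ A₂ *ᵥ x' = star z ⬝ᵥ A₃ *ᵥ z' := by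
  constructor
  · rintro ⟨X, -, rfl, rfl⟩ x z x' z' hxz hxz'
    rw [star_dotProduct_mul_mul_conjTranspose_mulVec, star_dotProduct_mul_mul_conjTranspose_mulVec,
      eq_neg_of_add_eq_zero_left hxz, eq_neg_of_add_eq_zero_left hxz', star_neg, mulVec_neg,
      dotProduct_neg, neg_dotProduct, neg_neg]
  · intro hA
    obtain ⟨Y₂, hY₂, rfl⟩ := exists_isHermitian_mul_mul_conjTranspose_eq hA₂ h₂
    obtain ⟨Y₃, hY₃, rfl⟩ := exists_isHermitian_mul_mul_conjTranspose_eq hA₃ h₃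
    refine exists_isHermitian_mul_mul_conjTranspose_eq_of_forms_agree hY₂ hY₃ B₂ B₃ ?_
    rintro _ ⟨⟨x, rfl⟩, ⟨y, hy⟩⟩ _ ⟨⟨x', rfl⟩, ⟨y', hy'⟩⟩
    simp only [mulVecLin_apply] at hy hy' ⊢
    have hxy := hA x (-y) x' (-y') (by rw [mulVec_neg, hy, add_neg_cancel])
      (by rw [mulVec_neg, hy', add_neg_cancel])
    rw [star_neg, mulVec_neg, dotProduct_neg, neg_dotProduct, neg_neg] at hxy
    rw [← star_dotProduct_mul_mul_conjTranspose_mulVec, hxy, ← hy, ← hy',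
      star_dotProduct_mul_mul_conjTranspose_mulVec]

end StarOrderedField

end Matrix

theorem stmt13 (m2 m3 n : ℕ)
    (A2 : Matrix (Fin m2) (Fin m2) ℂ) (hA2 : A2.IsHermitian)
    (A3 : Matrix (Fin m3) (Fin m3) ℂ) (hA3 : A3.IsHermitian)
    (B2 : Matrix (Fin m2) (Fin n) ℂ) (B3 : Matrix (Fin m3) (Fin n) ℂ)
    (h2 : LinearMap.range A2.mulVecLin ≤ LinearMap.range B2.mulVecLin)
    (h3 : LinearMap.range A3.mulVecLin ≤ LinearMap.range B3.mulVecLin) :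
    (∃ X : Matrix (Fin n) (Fin n) ℂ, X.IsHermitian ∧
        B2 * X * B2ᴴ = A2 ∧ B3 * X * B3ᴴ = A3) ↔
      (fromBlocks (fromBlocks A2 0 0 (-A3)) (fromRows B2 B3)
          (fromCols B2ᴴ B3ᴴ) (0 : Matrix (Fin n) (Fin n) ℂ)).rank
        = 2 * (fromRows B2 B3).rank := by
  rw [← conjTranspose_fromRows_eq_fromCols_conjTranspose,
    rank_fromBlocks_conjTranspose_eq_two_mul_rank_iff, map_ker_conjTranspose_le_range_iff,
    forall_ker_fromRows_conjTranspose_iff, exists_isHermitian_common_solution_iff hA2 hA3 h2 h3]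
end

section
/- Let A, B ∈ ℂ^{m×n} such that A·X = B has a Hermitian solution. Then A·X = B has a positive definite Hermitian solution X > 0 if and only if A·B* ≥ 0 and r(A·B*) = r(A). -/
open Matrix ComplexOrder

/-!
Since `A X₀ = B` with `X₀` Hermitian, `A Bᴴ = A X₀ Aᴴ`, and `A Bᴴ = A X Aᴴ` for every Hermitian
solution `X` of `A X = B`. When `A X Aᴴ ≥ 0`, the equality `r(A X Aᴴ) = r(A) = r(Aᴴ)` amounts to
`ker (A X Aᴴ) = ker Aᴴ`, i.e. to `X` being positive definite on the range of `Aᴴ`; this gives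
necessity. Conversely, let `P` be the orthogonal projection onto the range of `Aᴴ`, obtained as
`Aᴴ A R` with `R = cfc (·⁻¹) (Aᴴ A)` (a generalized inverse, as `0⁻¹ = 0`), and `Q = 1 - P`.
Then `M = P X₀ P + Q` is positive definite, and so is `N M Nᴴ` for the unipotent
`N = 1 + Q X₀ M⁻¹ P`. Since `A Q = 0` and `A M = A X₀ P`, it solves `A X = A X₀ = B`.
-/

namespace Matrix

lemma ker_mulVecLin_eq_iff_rank_eq {K k l m : Type*} [Field K] [Fintype k] [Fintype l]
    [Fintype m] {C : Matrix k m K} {D : Matrix l m K}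
    (h : LinearMap.ker C.mulVecLin ≤ LinearMap.ker D.mulVecLin) :
    LinearMap.ker C.mulVecLin = LinearMap.ker D.mulVecLin ↔ D.rank = C.rank := by
  have hC := C.mulVecLin.finrank_range_add_finrank_ker
  have hD := D.mulVecLin.finrank_range_add_finrank_ker
  rw [← rank] at hC hD
  refine ⟨fun heq => ?_, fun hr => Submodule.eq_of_le_of_finrank_eq h (by omega)⟩
  rw [heq] at hC
  omega

variable {𝕜 : Type*} [RCLike 𝕜] {m n : Type*}

section

variable [Fintype m] [Fintype n]

lemma dotProduct_mul_mul_conjTranspose_mulVec (A : Matrix m n 𝕜) (X : Matrix n n 𝕜)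
    (w : m → 𝕜) :
    star w ⬝ᵥ ((A * X * Aᴴ) *ᵥ w) = star (Aᴴ *ᵥ w) ⬝ᵥ (X *ᵥ (Aᴴ *ᵥ w)) := by
  rw [star_mulVec, conjTranspose_conjTranspose, ← dotProduct_mulVec, mulVec_mulVec,
    mulVec_mulVec, Matrix.mul_assoc]

lemma rank_mul_mul_conjTranspose_eq_rank_iff {A : Matrix m n 𝕜} {X : Matrix n n 𝕜}
    (hX : (A * X * Aᴴ).PosSemidef) :
    (A * X * Aᴴ).rank = A.rank ↔
      ∀ w, Aᴴ *ᵥ w ≠ 0 → 0 < star (Aᴴ *ᵥ w) ⬝ᵥ (X *ᵥ (Aᴴ *ᵥ w)) := by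
  have hle : LinearMap.ker Aᴴ.mulVecLin ≤ LinearMap.ker (A * X * Aᴴ).mulVecLin :=
    fun w hw => by
      simp only [LinearMap.mem_ker, mulVecLin_apply] at hw ⊢
      rw [← mulVec_mulVec, hw, mulVec_zero]
  rw [← rank_conjTranspose A, ← ker_mulVecLin_eq_iff_rank_eq hle]
  constructor
  · intro hker w hw
    rw [← dotProduct_mul_mul_conjTranspose_mulVec]
    refine (hX.dotProduct_mulVec_nonneg w).lt_of_ne fun h => hw ?_
    have hw' : w ∈ LinearMap.ker (A * X * Aᴴ).mulVecLin :=
      (hX.dotProduct_mulVec_zero_iff w).mp h.symm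
    rwa [← hker] at hw'
  · intro hpos
    refine le_antisymm hle fun w hw => ?_
    simp only [LinearMap.mem_ker, mulVecLin_apply] at hw ⊢
    by_contra hne
    exact (hpos w hne).ne' (by rw [← dotProduct_mul_mul_conjTranspose_mulVec, hw, dotProduct_zero])

variable [DecidableEq n]

lemma IsHermitian.exists_commute_mul_mul_eq {H : Matrix n n 𝕜} (hH : H.IsHermitian) :
    ∃ R : Matrix n n 𝕜, R.IsHermitian ∧ Commute H R ∧ H * R * H = H := by
  have hsa : IsSelfAdjoint H := hH
  have hcont : ContinuousOn (fun x : ℝ => x⁻¹) (spectrum ℝ H) :=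
    H.finite_real_spectrum.continuousOn _
  refine ⟨cfc (fun x : ℝ => x⁻¹) H, (cfc_predicate _ H : IsSelfAdjoint _),
    ((Commute.refl H).cfc_real _).symm, ?_⟩
  calc H * cfc (fun x : ℝ => x⁻¹) H * H = cfc (fun x : ℝ => x * x⁻¹ * x) H := by
        rw [cfc_mul _ _ H, cfc_mul _ _ H, cfc_id' ℝ H]
    _ = cfc (fun x : ℝ => x) H := cfc_congr fun x _ => by
        by_cases hx : x = 0 <;> simp [hx]
    _ = H := cfc_id' ℝ H

lemma exists_isHermitian_isIdempotentElem_mul_eq (A : Matrix m n 𝕜) :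
    ∃ P : Matrix n n 𝕜, P.IsHermitian ∧ IsIdempotentElem P ∧ A * P = A ∧
      ∃ G : Matrix m n 𝕜, P = Aᴴ * G := by
  obtain ⟨R, hR, hcomm, hHRH⟩ := (isHermitian_conjTranspose_mul_self A).exists_commute_mul_mul_eq
  set H := Aᴴ * A
  have hHP : H * (H * R) = H := by rw [hcomm.eq, ← Matrix.mul_assoc, hHRH]
  refine ⟨H * R, ?_, ?_, ?_, A * R, Matrix.mul_assoc _ _ _⟩
  · rw [IsHermitian, conjTranspose_mul, hR.eq, (isHermitian_conjTranspose_mul_self A).eq,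
      hcomm.eq]
  · rw [IsIdempotentElem, ← Matrix.mul_assoc, hHRH]
  · have h : (A * (H * R - 1))ᴴ * (A * (H * R - 1)) = 0 := by
      rw [conjTranspose_mul, Matrix.mul_assoc, ← Matrix.mul_assoc Aᴴ, Matrix.mul_sub,
        Matrix.mul_one, hHP, sub_self, Matrix.mul_zero]
    rw [conjTranspose_mul_self_eq_zero, Matrix.mul_sub, Matrix.mul_one, sub_eq_zero] at h
    exact h

end

section

variable [Fintype n] [DecidableEq n]

lemma posDef_mul_mul_add_one_sub {P X : Matrix n n 𝕜} (hP : P.IsHermitian)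
    (hPP : IsIdempotentElem P) (hX : X.IsHermitian)
    (hpos : ∀ v, P *ᵥ v ≠ 0 → 0 < star (P *ᵥ v) ⬝ᵥ (X *ᵥ (P *ᵥ v))) :
    (P * X * P + (1 - P)).PosDef := by
  have hQ : (1 - P).IsHermitian := isHermitian_one.sub hP
  refine .of_dotProduct_mulVec_pos ((hP.eq ▸ isHermitian_conjTranspose_mul_mul P hX).add hQ)
    fun v hv => ?_
  have hsandwich : ∀ S : Matrix n n 𝕜, S.IsHermitian → ∀ Y,
      star v ⬝ᵥ ((S * Y * S) *ᵥ v) = star (S *ᵥ v) ⬝ᵥ (Y *ᵥ (S *ᵥ v)) := fun S hS Y => by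
    simpa only [hS.eq] using dotProduct_mul_mul_conjTranspose_mulVec S Y v
  have hquad : star v ⬝ᵥ ((P * X * P + (1 - P)) *ᵥ v) =
      star (P *ᵥ v) ⬝ᵥ (X *ᵥ (P *ᵥ v)) + star ((1 - P) *ᵥ v) ⬝ᵥ ((1 - P) *ᵥ v) := by
    calc star v ⬝ᵥ ((P * X * P + (1 - P)) *ᵥ v)
        = star v ⬝ᵥ ((P * X * P) *ᵥ v) + star v ⬝ᵥ (((1 - P) * 1 * (1 - P)) *ᵥ v) := by
          rw [Matrix.mul_one, hPP.one_sub.eq, add_mulVec, dotProduct_add]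
      _ = _ := by rw [hsandwich P hP, hsandwich _ hQ, one_mulVec]
  rw [hquad]
  by_cases hPv : P *ᵥ v = 0
  · have hQv : (1 - P) *ᵥ v = v := by rw [sub_mulVec, hPv, one_mulVec, sub_zero]
    rw [hPv, hQv, mulVec_zero, dotProduct_zero, zero_add]
    exact dotProduct_star_self_pos_iff.mpr hv
  · exact add_pos_of_pos_of_nonneg (hpos v hPv) (dotProduct_star_self_nonneg _)

lemma exists_posDef_mul_eq_mul_of_isIdempotentElem (A : Matrix m n 𝕜) {P X₀ : Matrix n n 𝕜}
    (hP : P.IsHermitian) (hPP : IsIdempotentElem P) (hAP : A * P = A) (hX₀ : X₀.IsHermitian)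
    (hpos : ∀ v, P *ᵥ v ≠ 0 → 0 < star (P *ᵥ v) ⬝ᵥ (X₀ *ᵥ (P *ᵥ v))) :
    ∃ X : Matrix n n 𝕜, X.PosDef ∧ A * X = A * X₀ := by
  set Q := 1 - P
  set M := P * X₀ * P + Q
  have hQ : Q.IsHermitian := isHermitian_one.sub hP
  have hM : M.PosDef := posDef_mul_mul_add_one_sub hP hPP hX₀ hpos
  have hAQ : A * Q = 0 := by rw [Matrix.mul_sub, Matrix.mul_one, hAP, sub_self]
  have hAM : A * M = A * X₀ * P := by
    rw [Matrix.mul_add, hAQ, add_zero, ← Matrix.mul_assoc, ← Matrix.mul_assoc, hAP]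
  have hAMP : A * M * P = A * M := by rw [hAM, Matrix.mul_assoc, hPP.eq]
  have hAMM : A * M * M⁻¹ = A := by
    rw [Matrix.mul_assoc, mul_nonsing_inv _ ((isUnit_iff_isUnit_det M).mp hM.isUnit),
      Matrix.mul_one]
  set K := Q * X₀ * M⁻¹ * P
  have hPQ : P * Q = 0 := hPP.mul_one_sub_self
  have hK : IsNilpotent K := ⟨2, calc
    K ^ 2 = Q * X₀ * M⁻¹ * (P * Q) * X₀ * M⁻¹ * P := by simp only [K, sq, Matrix.mul_assoc]
    _ = 0 := by rw [hPQ, Matrix.mul_zero, Matrix.zero_mul, Matrix.zero_mul, Matrix.zero_mul]⟩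
  have hKH : Kᴴ = P * M⁻¹ * X₀ * Q := by
    simp only [K, conjTranspose_mul, hP.eq, hQ.eq, hX₀.eq, conjTranspose_nonsing_inv,
      hM.isHermitian.eq, Matrix.mul_assoc]
  refine ⟨(1 + K) * M * (1 + K)ᴴ,
    hM.mul_mul_conjTranspose_same (vecMul_injective_iff_isUnit.mpr hK.isUnit_one_add), ?_⟩
  have hAK : A * K = 0 := by simp only [K, ← Matrix.mul_assoc, hAQ, Matrix.zero_mul]
  calc A * ((1 + K) * M * (1 + K)ᴴ) = A * M + A * M * P * M⁻¹ * X₀ * Q := by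
        simp only [← Matrix.mul_assoc, Matrix.mul_add, Matrix.add_mul, hAK, Matrix.mul_one,
          Matrix.zero_mul, add_zero, conjTranspose_add, conjTranspose_one, hKH]
    _ = A * X₀ * (P + Q) := by rw [hAMP, hAMM, hAM, Matrix.mul_add]
    _ = A * X₀ := by rw [add_sub_cancel, Matrix.mul_one]

end

end Matrix

theorem stmt15 (m n : ℕ) (A B : Matrix (Fin m) (Fin n) ℂ)
    (hcons : ∃ X : Matrix (Fin n) (Fin n) ℂ, X.IsHermitian ∧ A * X = B) :
    (∃ X : Matrix (Fin n) (Fin n) ℂ, X.PosDef ∧ A * X = B) ↔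
      ((A * Bᴴ).PosSemidef ∧ (A * Bᴴ).rank = A.rank) := by
  obtain ⟨X₀, hX₀, rfl⟩ := hcons
  have hAB : ∀ X : Matrix (Fin n) (Fin n) ℂ, X.IsHermitian → A * (A * X)ᴴ = A * X * Aᴴ :=
    fun X hX => by rw [conjTranspose_mul, hX.eq, Matrix.mul_assoc]
  constructor
  · rintro ⟨X, hX, hAX⟩
    rw [← hAX, hAB X hX.isHermitian]
    have hpsd := hX.posSemidef.mul_mul_conjTranspose_same A
    exact ⟨hpsd, (rank_mul_mul_conjTranspose_eq_rank_iff hpsd).mpr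
      fun w hw => hX.dotProduct_mulVec_pos hw⟩
  · rintro ⟨hpsd, hrank⟩
    rw [hAB X₀ hX₀] at hpsd hrank
    have hpos := (rank_mul_mul_conjTranspose_eq_rank_iff hpsd).mp hrank
    obtain ⟨P, hP, hPP, hAP, G, rfl⟩ := exists_isHermitian_isIdempotentElem_mul_eq A
    exact exists_posDef_mul_eq_mul_of_isIdempotentElem A hP hPP hAP hX₀ fun v hv => by
      simpa only [mulVec_mulVec] using hpos (G *ᵥ v) (by rwa [mulVec_mulVec])
end

section
/- Assume A·X = B has a Hermitian solution (A, B ∈ ℂ^{m×n}) and let P ∈ ℂ^{n×n} be Hermitian. Then there exists a Hermitian solution X of A·X = B with X ≥ P if and only if range(B - A·P) = range(B·A* - A·P·A*) and B·A* - A·P·A* ≥ 0. -/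
open Matrix ComplexOrder

/-!
Substituting `X = P + Y` turns the problem into: `A * Y = C` has a positive semidefinite solution
`Y` iff `range C = range (C * Aᴴ)` and `C * Aᴴ ≥ 0`, where `C = B - A * P`.
If `Y = Sᴴ * S`, then `A * Y * Aᴴ = (A * Sᴴ) * (A * Sᴴ)ᴴ` has the same range as `A * Sᴴ`,
which contains the range of `A * Y`. Conversely, with `D = C * Aᴴ ≥ 0` and `C = D * W`,
the matrix `Y = Wᴴ * D * W` is positive semidefinite, and `A * Wᴴ * D = A * Cᴴ = Dᴴ = D`
gives `A * Y = D * W = C`.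
-/

open scoped MatrixOrder

namespace Matrix

section RangeMulVecLin

variable {l m n R : Type*} [Fintype m] [Fintype n]

theorem range_mulVecLin_mul_le [CommSemiring R] (M : Matrix l m R) (N : Matrix m n R) :
    LinearMap.range (M * N).mulVecLin ≤ LinearMap.range M.mulVecLin := by
  rw [mulVecLin_mul]
  exact LinearMap.range_comp_le_range _ _

theorem exists_mul_eq_of_range_le [CommSemiring R] [DecidableEq n] {M : Matrix l m R}
    {N : Matrix l n R} (h : LinearMap.range N.mulVecLin ≤ LinearMap.range M.mulVecLin) :
    ∃ W : Matrix m n R, M * W = N := by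
  choose w hw using fun j => h ⟨Pi.single j 1, rfl⟩
  refine ⟨of fun i j => w j i, ?_⟩
  ext i j
  have := congr_fun (hw j) i
  simp only [mulVecLin_apply, mulVec_single_one] at this
  simpa [mul_apply, mulVec, dotProduct] using this

theorem range_mulVecLin_self_mul_conjTranspose_s19 [Field R] [PartialOrder R] [StarRing R]
    [StarOrderedRing R] (M : Matrix m n R) :
    LinearMap.range (M * Mᴴ).mulVecLin = LinearMap.range M.mulVecLin := by
  refine Submodule.eq_of_le_of_finrank_le (range_mulVecLin_mul_le M Mᴴ) ?_
  exact (rank_self_mul_conjTranspose M).ge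

end RangeMulVecLin

variable {m n 𝕜 : Type*} [Fintype m] [Fintype n] [RCLike 𝕜]

theorem PosSemidef.range_mulVecLin_mul_mul_conjTranspose {Y : Matrix n n 𝕜} (hY : Y.PosSemidef)
    (A : Matrix m n 𝕜) :
    LinearMap.range (A * Y * Aᴴ).mulVecLin = LinearMap.range (A * Y).mulVecLin := by
  classical
  refine le_antisymm (range_mulVecLin_mul_le _ _) ?_
  obtain ⟨S, rfl⟩ := CStarAlgebra.nonneg_iff_eq_star_mul_self.mp hY.nonneg
  have hfactor : A * (star S * S) * Aᴴ = (A * Sᴴ) * (A * Sᴴ)ᴴ := by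
    simp only [conjTranspose_mul, conjTranspose_conjTranspose, star_eq_conjTranspose,
      Matrix.mul_assoc]
  rw [hfactor, range_mulVecLin_self_mul_conjTranspose_s19, star_eq_conjTranspose, ← Matrix.mul_assoc]
  exact range_mulVecLin_mul_le _ _

theorem exists_posSemidef_mul_eq_iff (A C : Matrix m n 𝕜) :
    (∃ Y : Matrix n n 𝕜, Y.PosSemidef ∧ A * Y = C) ↔
      LinearMap.range C.mulVecLin = LinearMap.range (C * Aᴴ).mulVecLin ∧
        (C * Aᴴ).PosSemidef := by
  classical
  constructor
  · rintro ⟨Y, hY, rfl⟩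
    exact ⟨(hY.range_mulVecLin_mul_mul_conjTranspose A).symm, hY.mul_mul_conjTranspose_same A⟩
  · rintro ⟨hrange, hD⟩
    obtain ⟨W, hW⟩ := exists_mul_eq_of_range_le hrange.le
    have hAWD : A * Wᴴ * (C * Aᴴ) = C * Aᴴ :=
      calc A * Wᴴ * (C * Aᴴ) = A * (C * Aᴴ * W)ᴴ := by
            rw [conjTranspose_mul, hD.isHermitian.eq, Matrix.mul_assoc]
        _ = (C * Aᴴ)ᴴ := by rw [hW, conjTranspose_mul, conjTranspose_conjTranspose]
        _ = C * Aᴴ := hD.isHermitian.eq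
    refine ⟨Wᴴ * (C * Aᴴ) * W, hD.conjTranspose_mul_mul_same W, ?_⟩
    rw [← Matrix.mul_assoc, ← Matrix.mul_assoc, hAWD, hW]

end Matrix

theorem stmt19_general (m n : ℕ) (A B : Matrix (Fin m) (Fin n) ℂ)
    (P : Matrix (Fin n) (Fin n) ℂ) (hP : P.IsHermitian) :
    (∃ X : Matrix (Fin n) (Fin n) ℂ, X.IsHermitian ∧ A * X = B ∧
        (X - P).PosSemidef) ↔
      (LinearMap.range (B - A * P).mulVecLin
          = LinearMap.range (B * Aᴴ - A * P * Aᴴ).mulVecLin ∧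
        (B * Aᴴ - A * P * Aᴴ).PosSemidef) := by
  rw [← Matrix.sub_mul, ← Matrix.exists_posSemidef_mul_eq_iff]
  constructor
  · rintro ⟨X, -, rfl, hXP⟩
    exact ⟨X - P, hXP, Matrix.mul_sub A X P⟩
  · rintro ⟨Y, hY, hAY⟩
    refine ⟨Y + P, hY.isHermitian.add hP, ?_, by rwa [add_sub_cancel_right]⟩
    rw [Matrix.mul_add, hAY, sub_add_cancel]

theorem stmt19 (m n : ℕ) (A B : Matrix (Fin m) (Fin n) ℂ)
    (hcons : ∃ X : Matrix (Fin n) (Fin n) ℂ, X.IsHermitian ∧ A * X = B)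
    (P : Matrix (Fin n) (Fin n) ℂ) (hP : P.IsHermitian) :
    (∃ X : Matrix (Fin n) (Fin n) ℂ, X.IsHermitian ∧ A * X = B ∧
        (X - P).PosSemidef) ↔
      (LinearMap.range (B - A * P).mulVecLin
          = LinearMap.range (B * Aᴴ - A * P * Aᴴ).mulVecLin ∧
        (B * Aᴴ - A * P * Aᴴ).PosSemidef) :=
  stmt19_general m n A B P hP
end
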